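/- arXiv:1606.08960 — 9 statements merged into one kernel-verified Lean document; each statement's English description precedes it below -/
import Mathlib

section
/- For every sequence c : ℕ → ℝ and all integers m ≥ 1 and n ≥ 1, the Hankel determinants satisfy the identity (H_m^{(n)})² + H_{m+1}^{(n−1)}·H_{m−1}^{(n+1)} = H_m^{(n−1)}·H_m^{(n+1)}. -/
open Matrix

private def cornerMap (n : ℕ) : Fin 2 ⊕ Fin n → Fin (n + 2) :=
  Sum.elim (fun a => if a = 0 then 0 else Fin.last (n + 1)) (fun j => j.succ.castSucc)

private lemma cornerMap_val (n : ℕ) (z : Fin 2 ⊕ Fin n) :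
    (cornerMap n z : ℕ) = Sum.elim (fun a : Fin 2 => if a = 0 then 0 else n + 1)
      (fun j : Fin n => (j : ℕ) + 1) z := by
  rcases z with a | j
  · by_cases h : a = 0 <;> simp [cornerMap, h]
  · simp [cornerMap]

private noncomputable def corner (n : ℕ) : Fin 2 ⊕ Fin n ≃ Fin (n + 2) :=
  Equiv.ofBijective (cornerMap n) <| (Fintype.bijective_iff_injective_and_card _).2
    ⟨by
      intro x y h
      have hv := congrArg Fin.val h
      rw [cornerMap_val, cornerMap_val] at hv
      rcases x with a | j <;> rcases y with b | k
      · fin_cases a <;> fin_cases b <;> simp_all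
      · have := k.isLt; by_cases h0 : a = 0 <;> simp [h0] at hv <;> omega
      · have := j.isLt; by_cases h0 : b = 0 <;> simp [h0] at hv <;> omega
      · simp only [Sum.elim_inr] at hv
        exact congrArg Sum.inr (Fin.ext (by omega)), by simp; omega⟩

private lemma corner_inl0 (n : ℕ) : corner n (Sum.inl 0) = 0 := rfl
private lemma corner_inl1 (n : ℕ) : corner n (Sum.inl 1) = Fin.last (n + 1) := rfl
private lemma corner_inr (n : ℕ) (j : Fin n) : corner n (Sum.inr j) = j.succ.castSucc := rfl

private lemma mid_ne_zero {n : ℕ} (j : Fin n) : (j.succ.castSucc : Fin (n + 2)) ≠ 0 := by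
  simp [Fin.ext_iff]
private lemma mid_ne_last {n : ℕ} (j : Fin n) :
    (j.succ.castSucc : Fin (n + 2)) ≠ Fin.last (n + 1) := by
  have := j.isLt; simp [Fin.ext_iff]; omega
private lemma mid_inj {n : ℕ} {j k : Fin n}
    (h : (j.succ.castSucc : Fin (n + 2)) = k.succ.castSucc) : j = k := by
  have := congrArg Fin.val h; simp at this; exact Fin.ext this

private lemma dj_inv (n : ℕ) (A : Matrix (Fin (n + 2)) (Fin (n + 2)) ℝ) (hA : A.det ≠ 0) :
    adjugate A 0 0 * adjugate A (Fin.last (n + 1)) (Fin.last (n + 1))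
      - adjugate A 0 (Fin.last (n + 1)) * adjugate A (Fin.last (n + 1)) 0
    = A.det * (A.submatrix (fun i : Fin n => i.succ.castSucc)
        (fun j : Fin n => j.succ.castSucc)).det := by
  set B := adjugate A with hB
  set L : Fin (n + 2) := Fin.last (n + 1) with hL
  set M : Matrix (Fin (n + 2)) (Fin (n + 2)) ℝ :=
    Matrix.of fun i k => if k = 0 then B i 0 else if k = L then B i L
      else if i = k then 1 else 0 with hM
  have hL0 : L ≠ 0 := by simp [hL, Fin.ext_iff]
  -- det M
  have hMdet : M.det = B 0 0 * B L L - B 0 L * B L 0 := by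
    rw [← det_submatrix_equiv_self (corner n) M]
    have : M.submatrix (corner n) (corner n) =
        fromBlocks !![B 0 0, B 0 L; B L 0, B L L] 0
          (Matrix.of fun (j : Fin n) (a : Fin 2) =>
            if a = 0 then B j.succ.castSucc 0 else B j.succ.castSucc L) 1 := by
      ext x y
      rcases x with a | j <;> rcases y with b | k
      · fin_cases a <;> fin_cases b <;>
          simp [corner_inl0, corner_inl1, hM, hL0, hL0.symm, hL]
      · fin_cases a <;>
          simp [-Fin.castSucc_succ, hL, corner_inl0, corner_inl1, corner_inr, hM, (mid_ne_zero k), (mid_ne_last k),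
            hL0.symm, Ne.symm (mid_ne_zero k), Ne.symm (mid_ne_last k)]
      · fin_cases b <;> simp [-Fin.castSucc_succ, hL, corner_inl0, corner_inl1, corner_inr, hM]
      · simp only [submatrix_apply, corner_inr, hM, of_apply, fromBlocks_apply₂₂,
          hL, (mid_ne_zero k), (mid_ne_last k), if_neg, one_apply]
        by_cases h : j = k
        · simp [h]
        · simp only [if_false]
          rw [if_neg (fun hh => h (mid_inj hh)), if_neg h]
    rw [this, det_fromBlocks_zero₁₂, det_one, mul_one, det_fin_two_of]
  -- A * M
  have hAB : ∀ i k, ∑ j, A i j * B j k = A.det * (if i = k then 1 else 0) := by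
    intro i k
    have h := congrFun (congrFun (mul_adjugate A) i) k
    simpa [Matrix.mul_apply, Matrix.one_apply] using h
  have hAM : A * M = Matrix.of fun i k =>
      if k = 0 then A.det * (if i = 0 then 1 else 0)
      else if k = L then A.det * (if i = L then 1 else 0) else A i k := by
    ext i k
    by_cases h0 : k = 0
    · subst h0; simpa [Matrix.mul_apply, hM] using hAB i 0
    by_cases hl : k = L
    · subst hl
      simp only [Matrix.mul_apply, hM, of_apply, if_neg hL0, if_pos rfl]
      simpa using hAB i L
    · simp only [Matrix.mul_apply, hM, of_apply, if_neg h0, if_neg hl, mul_ite, mul_one,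
        mul_zero]
      simp [Finset.sum_ite_eq' Finset.univ k (A i)]
  -- det (A * M)
  have hAMdet : (A * M).det = A.det ^ 2 * (A.submatrix (fun i : Fin n => i.succ.castSucc)
      (fun j : Fin n => j.succ.castSucc)).det := by
    rw [← det_submatrix_equiv_self (corner n) (A * M)]
    have : (A * M).submatrix (corner n) (corner n) =
        fromBlocks !![A.det, 0; 0, A.det]
          (Matrix.of fun (a : Fin 2) (j : Fin n) =>
            if a = 0 then A 0 j.succ.castSucc else A L j.succ.castSucc) 0
          (A.submatrix (fun i : Fin n => i.succ.castSucc) (fun j : Fin n => j.succ.castSucc)) := by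
      ext x y
      rcases x with a | j <;> rcases y with b | k
      · fin_cases a <;> fin_cases b <;>
          simp [corner_inl0, corner_inl1, hAM, hL0, hL0.symm, hL]
      · fin_cases a <;>
          simp [-Fin.castSucc_succ, hL, corner_inl0, corner_inl1, corner_inr, hAM, mid_ne_zero k, mid_ne_last k]
      · fin_cases b <;>
          simp [-Fin.castSucc_succ, hL, corner_inl0, corner_inl1, corner_inr, hAM, mid_ne_zero j, mid_ne_last j,
            hL0.symm, Ne.symm (mid_ne_zero j), Ne.symm (mid_ne_last j)]
      · simp [-Fin.castSucc_succ, hL, corner_inr, hAM, mid_ne_zero k, mid_ne_last k]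
    rw [this, det_fromBlocks_zero₂₁, det_fin_two_of]
    ring
  have hfin := hAMdet
  rw [det_mul, hMdet] at hfin
  exact mul_left_cancel₀ hA (hfin.trans (by ring))

private lemma dj (n : ℕ) (A : Matrix (Fin (n + 2)) (Fin (n + 2)) ℝ) :
    adjugate A 0 0 * adjugate A (Fin.last (n + 1)) (Fin.last (n + 1))
      - adjugate A 0 (Fin.last (n + 1)) * adjugate A (Fin.last (n + 1)) 0
    = A.det * (A.submatrix (fun i : Fin n => i.succ.castSucc)
        (fun j : Fin n => j.succ.castSucc)).det := by
  set L : Fin (n + 2) := Fin.last (n + 1) with hL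
  set At : ℝ → Matrix (Fin (n + 2)) (Fin (n + 2)) ℝ := fun t => A + t • 1 with hAt
  have hcont : Continuous At := continuous_const.add (continuous_id.smul continuous_const)
  have hpoly : ∀ t, ((-A).charpoly).eval t = (At t).det := by
    intro t
    rw [Matrix.charpoly, ← Polynomial.coe_evalRingHom, RingHom.map_det]
    congr 1
    ext i j
    by_cases h : i = j
    · subst h
      simp [charmatrix_apply_eq, hAt, Matrix.one_apply, add_comm]
    · simp [charmatrix_apply_ne _ _ _ h, hAt, Matrix.one_apply, h]
  have hfin : {t : ℝ | (At t).det = 0}.Finite := by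
    refine (Polynomial.finite_setOf_isRoot ((-A).charpoly_monic.ne_zero)).subset ?_
    intro t ht
    simp only [Set.mem_setOf_eq] at *
    rw [Polynomial.IsRoot, hpoly]
    exact ht
  have hdense : Dense {t : ℝ | (At t).det = 0}ᶜ := Set.Countable.dense_compl ℝ hfin.countable
  have hadj : Continuous fun t => adjugate (At t) := hcont.matrix_adjugate
  have h1 : Continuous fun t => adjugate (At t) 0 0 * adjugate (At t) L L
      - adjugate (At t) 0 L * adjugate (At t) L 0 :=
    ((hadj.matrix_elem 0 0).mul (hadj.matrix_elem L L)).sub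
      ((hadj.matrix_elem 0 L).mul (hadj.matrix_elem L 0))
  have h2 : Continuous fun t => (At t).det * ((At t).submatrix
      (fun i : Fin n => i.succ.castSucc) (fun j : Fin n => j.succ.castSucc)).det :=
    hcont.matrix_det.mul (hcont.matrix_submatrix _ _).matrix_det
  have key := Continuous.ext_on hdense h1 h2 (fun t ht => dj_inv n (At t) ht)
  have h0 := congrFun key 0
  simpa [hAt] using h0


/-- The Hankel determinant `H_m^{(n)}` of a sequence `c : ℕ → ℝ`: the determinant of
the `m × m` matrix whose `(i, j)` entry is `c (n + i + j)`.  By convention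
`hankel c 0 n = 1` (determinant of the empty matrix). -/
noncomputable def hankel (c : ℕ → ℝ) (m n : ℕ) : ℝ :=
  (Matrix.of fun i j : Fin m => c (n + (i : ℕ) + (j : ℕ))).det

/-- For every sequence `c : ℕ → ℝ` and all `m ≥ 1`, `n ≥ 1`, the Hankel determinants
satisfy `(H_m^{(n)})² + H_{m+1}^{(n−1)}·H_{m−1}^{(n+1)} = H_m^{(n−1)}·H_m^{(n+1)}`. -/
theorem hankel_rhombus_identity (c : ℕ → ℝ) (m n : ℕ) (hm : 1 ≤ m) (hn : 1 ≤ n) :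
    (hankel c m n) ^ 2 + hankel c (m + 1) (n - 1) * hankel c (m - 1) (n + 1)
      = hankel c m (n - 1) * hankel c m (n + 1) := by
  obtain ⟨k, rfl⟩ : ∃ k, m = k + 1 := ⟨m - 1, by omega⟩
  obtain ⟨l, rfl⟩ : ∃ l, n = l + 1 := ⟨n - 1, by omega⟩
  simp only [Nat.add_sub_cancel]
  set A : Matrix (Fin (k + 2)) (Fin (k + 2)) ℝ :=
    Matrix.of fun i j : Fin (k + 2) => c (l + (i : ℕ) + (j : ℕ)) with hA
  have hsub : ∀ (s : ℕ) (f g : Fin s → Fin (k + 2)) (a b : ℕ),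
      (∀ i, (f i : ℕ) = (i : ℕ) + a) → (∀ j, (g j : ℕ) = (j : ℕ) + b) →
      (A.submatrix f g).det = hankel c s (l + a + b) := by
    intro s f g a b hf hg
    unfold hankel
    congr 1
    ext i j
    simp only [submatrix_apply, hA, of_apply]
    congr 1
    have := hf i
    have := hg j
    omega
  have hdet : A.det = hankel c (k + 2) l := rfl
  set L : Fin (k + 2) := Fin.last (k + 1) with hL
  have hvsucc : ∀ i : Fin (k + 1), (((0 : Fin (k + 2)).succAbove i : Fin (k+2)) : ℕ) = (i : ℕ) + 1 := by
    intro i; simp [Fin.succAbove_zero]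
  have hvcast : ∀ i : Fin (k + 1), ((L.succAbove i : Fin (k+2)) : ℕ) = (i : ℕ) := by
    intro i; simp [hL, Fin.succAbove_last]
  have e00 : adjugate A 0 0 = hankel c (k + 1) (l + 2) := by
    rw [adjugate_fin_succ_eq_det_submatrix (n := k + 1)]
    rw [hsub (k + 1) _ _ 1 1 hvsucc hvsucc]
    norm_num
  have eLL : adjugate A L L = hankel c (k + 1) l := by
    rw [adjugate_fin_succ_eq_det_submatrix (n := k + 1)]
    rw [hsub (k + 1) _ _ 0 0 (fun i => by simpa using hvcast i)
      (fun j => by simpa using hvcast j)]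
    have : ((L : ℕ) + (L : ℕ)) = 2 * (k + 1) := by simp [hL]; ring
    rw [this]
    simp [pow_mul]
  have e0L : adjugate A 0 L = (-1 : ℝ) ^ (k + 1) * hankel c (k + 1) (l + 1) := by
    rw [adjugate_fin_succ_eq_det_submatrix (n := k + 1)]
    rw [hsub (k + 1) _ _ 0 1 (fun i => by simpa using hvcast i) hvsucc]
    norm_num [hL]
  have eL0 : adjugate A L 0 = (-1 : ℝ) ^ (k + 1) * hankel c (k + 1) (l + 1) := by
    rw [adjugate_fin_succ_eq_det_submatrix (n := k + 1)]
    rw [hsub (k + 1) _ _ 1 0 hvsucc (fun j => by simpa using hvcast j)]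
    norm_num [hL]
  have einner : (A.submatrix (fun i : Fin k => i.succ.castSucc)
      (fun j : Fin k => j.succ.castSucc)).det = hankel c k (l + 2) := by
    rw [hsub k _ _ 1 1 (fun i => by simp) (fun j => by simp)]
  have key := dj k A
  rw [e00, eLL, e0L, eL0, einner, hdet] at key
  simp only [show k + 1 + 1 = k + 2 from rfl, show l + 1 + 1 = l + 2 from rfl]
  have hsq : ((-1 : ℝ) ^ (k + 1)) * ((-1 : ℝ) ^ (k + 1)) = 1 := by
    rw [← pow_add]
    exact Even.neg_one_pow ⟨k + 1, by ring⟩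
  linear_combination (-1 : ℝ) * key - (hankel c (k + 1) (l + 1)) ^ 2 * hsq
end

section
/- (Addition rhombus rule.) Let c : ℕ → ℝ, let m ≥ 1 and n ≥ 0, and assume H_m^{(n)} ≠ 0, H_m^{(n+1)} ≠ 0, H_{m−1}^{(n+1)} ≠ 0 and H_{m−1}^{(n+2)} ≠ 0. Then q_m^{(n)} + e_m^{(n)} = q_m^{(n+1)} + e_{m−1}^{(n+1)}. -/
/-- `q_m^{(n)} = (H_m^{(n+1)}·H_{m−1}^{(n)})/(H_m^{(n)}·H_{m−1}^{(n+1)})`. -/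
noncomputable def qdQ (c : ℕ → ℝ) (m n : ℕ) : ℝ :=
  (hankel c m (n + 1) * hankel c (m - 1) n) / (hankel c m n * hankel c (m - 1) (n + 1))

/-- `e_m^{(n)} = (H_{m+1}^{(n)}·H_{m−1}^{(n+1)})/(H_m^{(n)}·H_m^{(n+1)})` for `m ≥ 1`,
and `e_0^{(n)} = 0`. -/
noncomputable def qdE (c : ℕ → ℝ) (m n : ℕ) : ℝ :=
  if m = 0 then 0
  else (hankel c (m + 1) n * hankel c (m - 1) (n + 1)) / (hankel c m n * hankel c m (n + 1))


open Matrix Polynomial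

/-- Equiv putting the distinguished `Fin 1` index first. -/
def emb0 (m : ℕ) : Fin 1 ⊕ Fin m ≃ Fin (m + 1) where
  toFun := Sum.elim (fun _ => (0 : Fin (m + 1))) (fun i => i.succ)
  invFun x := if h : (x : ℕ) = 0 then .inl 0 else .inr ⟨(x : ℕ) - 1, by omega⟩
  left_inv := by
    rintro (a | i)
    · simp [Fin.eq_zero a]
    · simp
  right_inv := by
    intro x
    by_cases h : (x : ℕ) = 0
    · simp [h, Fin.ext_iff]
    · simp only [h, dif_neg, not_false_iff, Sum.elim_inr]
      ext
      simp
      omega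

/-- Equiv putting the distinguished `Fin 1` index last. -/
def emb1 (m : ℕ) : Fin 1 ⊕ Fin m ≃ Fin (m + 1) where
  toFun := Sum.elim (fun _ => Fin.last m) (fun i => i.castSucc)
  invFun x := if h : (x : ℕ) = m then .inl 0 else .inr ⟨(x : ℕ), by omega⟩
  left_inv := by
    rintro (a | i)
    · simp [Fin.eq_zero a]
    · have hi : (i : ℕ) ≠ m := by have := i.2; omega
      simp [hi]
  right_inv := by
    intro x
    by_cases h : (x : ℕ) = m
    · simp [h, Fin.ext_iff]
    · simp [h, Fin.ext_iff]

/-- Equiv putting the two distinguished indices first and last. -/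
def embA (m : ℕ) : Fin 2 ⊕ Fin m ≃ Fin (m + 2) where
  toFun := Sum.elim (fun a => if a = 0 then 0 else Fin.last (m + 1))
    (fun i => ⟨(i : ℕ) + 1, by omega⟩)
  invFun x :=
    if h0 : (x : ℕ) = 0 then .inl 0
    else if h : (x : ℕ) = m + 1 then .inl 1
    else .inr ⟨(x : ℕ) - 1, by have := x.2; omega⟩
  left_inv := by
    rintro (a | i)
    · fin_cases a <;> simp
    · have h1 : (i : ℕ) + 1 ≠ 0 := by omega
      have h2 : (i : ℕ) + 1 ≠ m + 1 := by have := i.2; omega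
      simp [h1, h2]
      omega
  right_inv := by
    intro x
    by_cases h : (x : ℕ) = 0
    · simp [h]; exact Fin.ext h.symm
    · by_cases h' : (x : ℕ) = m + 1
      · simp [h, h']; exact Fin.ext (by simp [h'])
      · simp [h, h']; ext; simp; omega

@[simp] lemma emb0_inl (m : ℕ) (a : Fin 1) : ((emb0 m) (.inl a) : ℕ) = 0 := rfl
@[simp] lemma emb0_inr (m : ℕ) (i : Fin m) : ((emb0 m) (.inr i) : ℕ) = (i : ℕ) + 1 := rfl
@[simp] lemma emb1_inl (m : ℕ) (a : Fin 1) : ((emb1 m) (.inl a) : ℕ) = m := rfl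
@[simp] lemma emb1_inr (m : ℕ) (i : Fin m) : ((emb1 m) (.inr i) : ℕ) = (i : ℕ) := rfl
@[simp] lemma embA_inl (m : ℕ) (a : Fin 2) : ((embA m) (.inl a) : ℕ) = (a : ℕ) * (m + 1) := by
  fin_cases a <;> simp [embA, Fin.last]
@[simp] lemma embA_inr (m : ℕ) (i : Fin m) : ((embA m) (.inr i) : ℕ) = (i : ℕ) + 1 := rfl

lemma det_submatrix_two {N : ℕ} {I : Type*} [Fintype I] [DecidableEq I]
    (M : Matrix (Fin N) (Fin N) ℝ) (e f : I ≃ Fin N) :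
    (M.submatrix e f).det = (Equiv.Perm.sign (e.trans f.symm) : ℤ) * M.det := by
  have h : M.submatrix e f = (M.submatrix f f).submatrix (e.trans f.symm) id := by
    ext i j
    simp
  rw [h, Matrix.det_permute, Matrix.det_submatrix_equiv_self]

lemma sign01 (m : ℕ) :
    Equiv.Perm.sign ((emb0 m).trans (emb1 m).symm) = (-1) ^ m := by
  have hconj : Equiv.permCongr (emb0 m) ((emb0 m).trans (emb1 m).symm) = finRotate (m + 1) := by
    ext x
    have hsymm : (emb1 m).symm x =
        if h : (x : ℕ) = m then Sum.inl 0 else Sum.inr ⟨(x : ℕ), by have := x.2; omega⟩ := rfl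
    simp only [Equiv.permCongr_apply, Equiv.trans_apply, Equiv.apply_symm_apply, hsymm,
      finRotate_succ_apply]
    rw [Fin.val_add_one]
    by_cases h : (x : ℕ) = m
    · have hx : x = Fin.last m := by ext; simpa using h
      simp [h, hx]
    · have hx : x ≠ Fin.last m := by simp [Fin.ext_iff]; omega
      simp [h, hx]
  rw [← Equiv.Perm.sign_permCongr (emb0 m), hconj, sign_finRotate, Nat.add_sub_cancel]

lemma sign10 (m : ℕ) :
    Equiv.Perm.sign ((emb1 m).trans (emb0 m).symm) = (-1) ^ m := by
  have h : (emb1 m).trans (emb0 m).symm = ((emb0 m).trans (emb1 m).symm)⁻¹ := rfl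
  rw [h, Equiv.Perm.sign_inv, sign01]

noncomputable def PM (c : ℕ → ℝ) (m n : ℕ) : Matrix (Fin 2) (Fin 2) ℝ :=
  Matrix.of fun a b => c (n + (a : ℕ) * (m + 1) + (b : ℕ) * (m + 1))

noncomputable def QM (c : ℕ → ℝ) (m n : ℕ) : Matrix (Fin 2) (Fin m) ℝ :=
  Matrix.of fun a j => c (n + (a : ℕ) * (m + 1) + ((j : ℕ) + 1))

noncomputable def RM (c : ℕ → ℝ) (m n : ℕ) : Matrix (Fin m) (Fin 2) ℝ :=
  Matrix.of fun i b => c (n + ((i : ℕ) + 1) + (b : ℕ) * (m + 1))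

noncomputable def DM (c : ℕ → ℝ) (m n : ℕ) : Matrix (Fin m) (Fin m) ℝ :=
  Matrix.of fun i j => c (n + ((i : ℕ) + 1) + ((j : ℕ) + 1))

lemma DM_det (c : ℕ → ℝ) (m n : ℕ) : (DM c m n).det = hankel c m (n + 2) := by
  unfold DM hankel
  congr 1
  ext i j
  simp only [Matrix.of_apply]
  congr 1
  omega

lemma hankel_big (c : ℕ → ℝ) (m n : ℕ) [Invertible (DM c m n)] :
    hankel c (m + 2) n
      = (DM c m n).det * (PM c m n - QM c m n * ⅟(DM c m n) * RM c m n).det := by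
  have h1 : (Matrix.of fun i j : Fin (m + 2) => c (n + (i : ℕ) + (j : ℕ))).submatrix
      (embA m) (embA m) = Matrix.fromBlocks (PM c m n) (QM c m n) (RM c m n) (DM c m n) := by
    ext (a | i) (b | j) <;>
      simp only [Matrix.submatrix_apply, Matrix.of_apply, Matrix.fromBlocks_apply₁₁,
        Matrix.fromBlocks_apply₁₂, Matrix.fromBlocks_apply₂₁, Matrix.fromBlocks_apply₂₂,
        PM, QM, RM, DM, embA_inl, embA_inr]
  rw [hankel, ← Matrix.det_submatrix_equiv_self (embA m), h1, Matrix.det_fromBlocks₂₂]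

lemma hankel_minor (c : ℕ → ℝ) (m n : ℕ) [Invertible (DM c m n)] (a b : Fin 2)
    (e f : (Fin 1 ⊕ Fin m) ≃ Fin (m + 1))
    (H1 : ∀ x y : Fin 1, n + (a : ℕ) + (b : ℕ) + (e (.inl x) : ℕ) + (f (.inl y) : ℕ)
      = n + (a : ℕ) * (m + 1) + (b : ℕ) * (m + 1))
    (H2 : ∀ (x : Fin 1) (j : Fin m), n + (a : ℕ) + (b : ℕ) + (e (.inl x) : ℕ) + (f (.inr j) : ℕ)
      = n + (a : ℕ) * (m + 1) + ((j : ℕ) + 1))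
    (H3 : ∀ (i : Fin m) (y : Fin 1), n + (a : ℕ) + (b : ℕ) + (e (.inr i) : ℕ) + (f (.inl y) : ℕ)
      = n + ((i : ℕ) + 1) + (b : ℕ) * (m + 1))
    (H4 : ∀ (i j : Fin m), n + (a : ℕ) + (b : ℕ) + (e (.inr i) : ℕ) + (f (.inr j) : ℕ)
      = n + ((i : ℕ) + 1) + ((j : ℕ) + 1)) :
    ((Matrix.of fun i j : Fin (m + 1) => c (n + (a : ℕ) + (b : ℕ) + (i : ℕ) + (j : ℕ))).submatrix
      e f).det
      = (DM c m n).det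
        * (PM c m n - QM c m n * ⅟(DM c m n) * RM c m n) a b := by
  have h1 : (Matrix.of fun i j : Fin (m + 1) =>
        c (n + (a : ℕ) + (b : ℕ) + (i : ℕ) + (j : ℕ))).submatrix e f
      = Matrix.fromBlocks (Matrix.of fun _ _ : Fin 1 => PM c m n a b)
          (Matrix.of fun (_ : Fin 1) (j : Fin m) => QM c m n a j)
          (Matrix.of fun (i : Fin m) (_ : Fin 1) => RM c m n i b) (DM c m n) := by
    ext (x | i) (y | j) <;>
      simp only [Matrix.submatrix_apply, Matrix.of_apply, Matrix.fromBlocks_apply₁₁,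
        Matrix.fromBlocks_apply₁₂, Matrix.fromBlocks_apply₂₁, Matrix.fromBlocks_apply₂₂,
        PM, QM, RM, DM]
    · exact congrArg c (H1 x y)
    · exact congrArg c (H2 x j)
    · exact congrArg c (H3 i y)
    · exact congrArg c (H4 i j)
  rw [h1, Matrix.det_fromBlocks₂₂, Matrix.det_fin_one]
  congr 1

lemma dodgson_generic (c : ℕ → ℝ) (m n : ℕ) (hD : hankel c m (n + 2) ≠ 0) :
    hankel c (m + 2) n * hankel c m (n + 2)
      = hankel c (m + 1) n * hankel c (m + 1) (n + 2) - hankel c (m + 1) (n + 1) ^ 2 := by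
  haveI : Invertible (DM c m n) :=
    Matrix.invertibleOfIsUnitDet _ (by rw [DM_det]; exact isUnit_iff_ne_zero.mpr hD)
  set S := PM c m n - QM c m n * ⅟(DM c m n) * RM c m n with hS
  have h00 : hankel c (m + 1) n = (DM c m n).det * S 0 0 := by
    have hk := hankel_minor c m n 0 0 (emb0 m) (emb0 m)
      (by intro u v; simp only [Fin.val_zero, emb0_inl, emb0_inr, Fin.isValue]; omega)
      (by intro u v; simp only [Fin.val_zero, emb0_inl, emb0_inr, Fin.isValue]; omega)
      (by intro u v; simp only [Fin.val_zero, emb0_inl, emb0_inr, Fin.isValue]; omega)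
      (by intro u v; simp only [Fin.val_zero, emb0_inl, emb0_inr, Fin.isValue]; omega)
    rw [Matrix.det_submatrix_equiv_self] at hk
    rw [← hk]
    unfold hankel
    congr 1
  have h11 : hankel c (m + 1) (n + 2) = (DM c m n).det * S 1 1 := by
    have hk := hankel_minor c m n 1 1 (emb1 m) (emb1 m)
      (by intro u v; simp only [Fin.val_one, emb1_inl, emb1_inr, Fin.isValue]; omega)
      (by intro u v; simp only [Fin.val_one, emb1_inl, emb1_inr, Fin.isValue]; omega)
      (by intro u v; simp only [Fin.val_one, emb1_inl, emb1_inr, Fin.isValue]; omega)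
      (by intro u v; simp only [Fin.val_one, emb1_inl, emb1_inr, Fin.isValue]; omega)
    rw [Matrix.det_submatrix_equiv_self] at hk
    rw [← hk]
    unfold hankel
    congr 1
  have h01 : (-1 : ℝ) ^ m * hankel c (m + 1) (n + 1) = (DM c m n).det * S 0 1 := by
    have hk := hankel_minor c m n 0 1 (emb0 m) (emb1 m)
      (by intro u v; simp only [Fin.val_zero, Fin.val_one, emb0_inl, emb0_inr, emb1_inl,
        emb1_inr, Fin.isValue]; omega)
      (by intro u v; simp only [Fin.val_zero, Fin.val_one, emb0_inl, emb0_inr, emb1_inl,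
        emb1_inr, Fin.isValue]; omega)
      (by intro u v; simp only [Fin.val_zero, Fin.val_one, emb0_inl, emb0_inr, emb1_inl,
        emb1_inr, Fin.isValue]; omega)
      (by intro u v; simp only [Fin.val_zero, Fin.val_one, emb0_inl, emb0_inr, emb1_inl,
        emb1_inr, Fin.isValue]; omega)
    rw [det_submatrix_two, sign01] at hk
    rw [← hk]
    push_cast
    congr 1
  have h10 : (-1 : ℝ) ^ m * hankel c (m + 1) (n + 1) = (DM c m n).det * S 1 0 := by
    have hk := hankel_minor c m n 1 0 (emb1 m) (emb0 m)
      (by intro u v; simp only [Fin.val_zero, Fin.val_one, emb0_inl, emb0_inr, emb1_inl,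
        emb1_inr, Fin.isValue]; omega)
      (by intro u v; simp only [Fin.val_zero, Fin.val_one, emb0_inl, emb0_inr, emb1_inl,
        emb1_inr, Fin.isValue]; omega)
      (by intro u v; simp only [Fin.val_zero, Fin.val_one, emb0_inl, emb0_inr, emb1_inl,
        emb1_inr, Fin.isValue]; omega)
      (by intro u v; simp only [Fin.val_zero, Fin.val_one, emb0_inl, emb0_inr, emb1_inl,
        emb1_inr, Fin.isValue]; omega)
    rw [det_submatrix_two, sign10] at hk
    rw [← hk]
    push_cast
    congr 1
  have hsq : hankel c (m + 1) (n + 1) ^ 2 = ((DM c m n).det * S 0 1) * ((DM c m n).det * S 1 0) := by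
    rw [← h01, ← h10]
    have h2 : ((-1 : ℝ)) ^ (m + m) = 1 := Even.neg_one_pow ⟨m, rfl⟩
    calc hankel c (m + 1) (n + 1) ^ 2
        = (-1 : ℝ) ^ (m + m) * hankel c (m + 1) (n + 1) ^ 2 := by rw [h2, one_mul]
      _ = ((-1 : ℝ) ^ m * hankel c (m + 1) (n + 1)) * ((-1 : ℝ) ^ m * hankel c (m + 1) (n + 1)) := by
          rw [pow_add]; ring
  calc hankel c (m + 2) n * hankel c m (n + 2)
      = ((DM c m n).det * S.det) * (DM c m n).det := by
        rw [hankel_big c m n, DM_det, ← hS]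
    _ = ((DM c m n).det * S 0 0) * ((DM c m n).det * S 1 1)
        - ((DM c m n).det * S 0 1) * ((DM c m n).det * S 1 0) := by
        rw [Matrix.det_fin_two]; ring
    _ = hankel c (m + 1) n * hankel c (m + 1) (n + 2) - hankel c (m + 1) (n + 1) ^ 2 := by
        rw [← h00, ← h11, ← hsq]

noncomputable def dmo (m : ℕ) : ℕ → ℝ := fun k => ∑ l : Fin m, ((l : ℝ) + 1) ^ k

lemma hankel_dmo (m s : ℕ) : hankel (dmo m) m s ≠ 0 := by
  classical
  set v : Fin m → ℝ := fun l => (l : ℝ) + 1 with hv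
  have hvd : Matrix.det (Matrix.vandermonde v) ≠ 0 := by
    rw [Matrix.det_vandermonde]
    apply Finset.prod_ne_zero_iff.mpr
    intro i _
    apply Finset.prod_ne_zero_iff.mpr
    intro j hj
    have hij : i < j := Finset.mem_Ioi.mp hj
    have : ((i : ℕ) : ℝ) < ((j : ℕ) : ℝ) := by exact_mod_cast hij
    simp only [hv]
    intro hc
    rw [sub_eq_zero] at hc
    linarith
  have hM : (Matrix.of fun i j : Fin m => dmo m (s + (i : ℕ) + (j : ℕ)))
      = (Matrix.vandermonde v)ᵀ * (Matrix.of fun (l : Fin m) (j : Fin m) => v l ^ s * v l ^ (j : ℕ)) := by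
    ext i j
    simp only [Matrix.of_apply, Matrix.mul_apply, Matrix.transpose_apply, Matrix.vandermonde_apply,
      dmo]
    apply Finset.sum_congr rfl
    intro l _
    simp only [hv, ← pow_add]
    congr 1
    omega
  have hB : (Matrix.of fun (l : Fin m) (j : Fin m) => v l ^ s * v l ^ (j : ℕ)).det
      = (∏ l : Fin m, v l ^ s) * (Matrix.vandermonde v).det := by
    rw [← Matrix.det_mul_column (fun l => v l ^ s) (Matrix.vandermonde v)]
    congr 1
  have hvne : ∀ l : Fin m, v l ≠ 0 := by
    intro l
    simp only [hv]
    positivity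
  unfold hankel
  rw [hM, Matrix.det_mul, Matrix.det_transpose, hB]
  apply mul_ne_zero hvd
  apply mul_ne_zero _ hvd
  apply Finset.prod_ne_zero_iff.mpr
  intro l _
  exact pow_ne_zero _ (hvne l)

noncomputable def hankelP (c d : ℕ → ℝ) (m n : ℕ) : Polynomial ℝ :=
  (Matrix.of fun i j : Fin m =>
    (Polynomial.C (c (n + (i : ℕ) + (j : ℕ))) + Polynomial.X * Polynomial.C (d (n + (i : ℕ) + (j : ℕ))))).det

lemma eval_hankelP (c d : ℕ → ℝ) (t : ℝ) (m n : ℕ) :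
    (hankelP c d m n).eval t = hankel (fun k => c k + t * d k) m n := by
  unfold hankelP hankel
  rw [← Polynomial.coe_evalRingHom, RingHom.map_det]
  congr 1
  ext i j
  simp [RingHom.mapMatrix_apply, Matrix.map_apply]
  ring

lemma dodgson (c : ℕ → ℝ) (m n : ℕ) :
    hankel c (m + 2) n * hankel c m (n + 2)
      = hankel c (m + 1) n * hankel c (m + 1) (n + 2) - hankel c (m + 1) (n + 1) ^ 2 := by
  classical
  set d := dmo m with hd
  have hrel : ∀ t : ℝ, t ≠ 0 →
      (hankelP c d m (n + 2)).eval t = t ^ m * (hankelP d c m (n + 2)).eval t⁻¹ := by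
    intro t ht
    rw [eval_hankelP, eval_hankelP]
    unfold hankel
    calc (Matrix.of fun i j : Fin m => c (n + 2 + (i : ℕ) + (j : ℕ)) + t * d (n + 2 + (i : ℕ) + (j : ℕ))).det
        = (t • Matrix.of fun i j : Fin m =>
            d (n + 2 + (i : ℕ) + (j : ℕ)) + t⁻¹ * c (n + 2 + (i : ℕ) + (j : ℕ))).det := by
          congr 1
          ext i j
          simp only [Matrix.smul_apply, Matrix.of_apply, smul_eq_mul]
          field_simp
          ring
      _ = t ^ m * (Matrix.of fun i j : Fin m =>
            d (n + 2 + (i : ℕ) + (j : ℕ)) + t⁻¹ * c (n + 2 + (i : ℕ) + (j : ℕ))).det := by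
          rw [Matrix.det_smul, Fintype.card_fin]
  have hGswap : hankelP d c m (n + 2) ≠ 0 := by
    intro h0
    have h1 : (hankelP d c m (n + 2)).eval 0 = hankel d m (n + 2) := by
      rw [eval_hankelP]
      simp
    rw [h0] at h1
    simp at h1
    exact hankel_dmo m (n + 2) h1.symm
  have hP : hankelP c d m (n + 2) ≠ 0 := by
    intro h0
    apply hGswap
    apply Polynomial.eq_zero_of_infinite_isRoot
    apply Set.Infinite.mono (s := {s : ℝ | s ≠ 0})
    · intro s hs
      have hs' : (s : ℝ) ≠ 0 := hs
      have := hrel s⁻¹ (inv_ne_zero hs')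
      rw [h0, inv_inv] at this
      simp only [Polynomial.eval_zero] at this
      have hpow : (s⁻¹ : ℝ) ^ m ≠ 0 := pow_ne_zero _ (inv_ne_zero hs')
      simp only [Set.mem_setOf_eq, Polynomial.IsRoot]
      rcases mul_eq_zero.mp this.symm with h | h
      · exact absurd h hpow
      · exact h
    · exact Set.infinite_of_injective_forall_mem (f := fun x : ℕ => (x : ℝ) + 1)
        (by intro a b hab; simpa using hab)
        (by intro x; simp only [Set.mem_setOf_eq]; positivity)
  set Pd := hankelP c d (m + 2) n * hankelP c d m (n + 2)
      - (hankelP c d (m + 1) n * hankelP c d (m + 1) (n + 2) - hankelP c d (m + 1) (n + 1) ^ 2)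
    with hPd
  have hroots : {t : ℝ | (hankelP c d m (n + 2)).eval t ≠ 0} ⊆ {t : ℝ | Pd.IsRoot t} := by
    intro t ht
    have hgen := dodgson_generic (fun k => c k + t * d k) m n (by rw [← eval_hankelP]; exact ht)
    simp only [Set.mem_setOf_eq, Polynomial.IsRoot, hPd, Polynomial.eval_sub,
      Polynomial.eval_mul, Polynomial.eval_pow, eval_hankelP]
    linarith [hgen]
  have hfin : {t : ℝ | (hankelP c d m (n + 2)).eval t = 0}.Finite :=
    Polynomial.finite_setOf_isRoot hP
  have hinf : {t : ℝ | (hankelP c d m (n + 2)).eval t ≠ 0}.Infinite := by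
    have h2 := Set.Finite.infinite_compl hfin
    have h3 : {t : ℝ | (hankelP c d m (n + 2)).eval t = 0}ᶜ
        = {t : ℝ | (hankelP c d m (n + 2)).eval t ≠ 0} := by
      ext x
      simp
    rwa [h3] at h2
  have hPd0 : Pd = 0 := Polynomial.eq_zero_of_infinite_isRoot _ (hinf.mono hroots)
  have he := congrArg (Polynomial.eval 0) hPd0
  simp only [hPd, Polynomial.eval_sub, Polynomial.eval_mul, Polynomial.eval_pow,
    Polynomial.eval_zero, eval_hankelP] at he
  simp only [zero_mul, add_zero] at he
  linarith [he]

/-- Addition rhombus rule: `q_m^{(n)} + e_m^{(n)} = q_m^{(n+1)} + e_{m−1}^{(n+1)}`. -/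
theorem qd_addition_rhombus (c : ℕ → ℝ) (m n : ℕ) (hm : 1 ≤ m)
    (h1 : hankel c m n ≠ 0) (h2 : hankel c m (n + 1) ≠ 0)
    (h3 : hankel c (m - 1) (n + 1) ≠ 0) (h4 : hankel c (m - 1) (n + 2) ≠ 0) :
    qdQ c m n + qdE c m n = qdQ c m (n + 1) + qdE c (m - 1) (n + 1) := by
  have hz : ∀ s : ℕ, hankel c 0 s = 1 := by
    intro s
    unfold hankel
    exact Matrix.det_fin_zero
  obtain ⟨M, rfl⟩ : ∃ M, m = M + 1 := ⟨m - 1, by omega⟩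
  simp only [Nat.add_sub_cancel] at h3 h4 ⊢
  rcases Nat.eq_zero_or_pos M with rfl | hM
  · -- m = 1
    have hkey := dodgson c 0 n
    rw [hz (n + 2)] at hkey
    simp only [qdQ, qdE, Nat.add_sub_cancel, hz, if_neg (Nat.succ_ne_zero 0), if_pos rfl,
      zero_add, Nat.zero_add]
    norm_num at hkey h1 h2 ⊢
    field_simp
    linear_combination hkey
  · obtain ⟨K, rfl⟩ : ∃ K, M = K + 1 := ⟨M - 1, by omega⟩
    have hA := dodgson c (K + 1) n
    have hB := dodgson c K n
    simp only [qdQ, qdE, Nat.add_sub_cancel, if_neg (by omega : ¬ K + 1 + 1 = 0),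
      if_neg (by omega : ¬ K + 1 = 0)] at *
    have hA' : hankel c (K + 1 + 1 + 1) n * hankel c (K + 1) (n + 1 + 1)
        = hankel c (K + 1 + 1) n * hankel c (K + 1 + 1) (n + 1 + 1)
          - hankel c (K + 1 + 1) (n + 1) ^ 2 := hA
    have hB' : hankel c (K + 1 + 1) n * hankel c K (n + 1 + 1)
        = hankel c (K + 1) n * hankel c (K + 1) (n + 1 + 1)
          - hankel c (K + 1) (n + 1) ^ 2 := hB
    have h4' : hankel c (K + 1) (n + 1 + 1) ≠ 0 := h4
    field_simp
    linear_combination ((hankel c (K + 1) (n + 1))^2 * hA' - (hankel c (K + 1 + 1) (n + 1))^2 * hB')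
end

section
/- (Lemma 3.3, q-part: rounding error bound for one inner loop with perturbed inputs.) Let u ≥ 0 with 2u < 1 and γ₂ = 2u/(1 − 2u). Let e, e', q' be reals with e ≠ 0 and set q₊ = (e'/e)·q'. Let εe, εe', εq' be reals with ê := e + εe ≠ 0, and set ê' = e' + εe', q̂' = q' + εq', b = |e/ê| and ᾱ = b·(|q'|·|εe'| + |e'|·|εq'| + |q₊|·|εe| + |εq'|·|εe'|)/|e|. Suppose δ₃, δ₄ are reals with |δ₃| ≤ u, |δ₄| ≤ u and q̂₊ = ((ê'/ê)(1 + δ₃))·q̂'·(1 + δ₄). Then |q̂₊ − q₊| ≤ γ₂·|q₊| + (1 + γ₂)·ᾱ. -/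
/-- `γ_k = k·u/(1 − k·u)`. -/
noncomputable def gam (u : ℝ) (k : ℕ) : ℝ := k * u / (1 - k * u)

/-- Lemma 3.3, q-part: rounding error bound for one inner loop of the qd algorithm with
perturbed inputs.  With `e ≠ 0`, `q₊ = (e'/e)·q'`, `ê = e + εe ≠ 0`, `ê' = e' + εe'`,
`q̂' = q' + εq'`, `b = |e/ê|`,
`ᾱ = b·(|q'|·|εe'| + |e'|·|εq'| + |q₊|·|εe| + |εq'|·|εe'|)/|e|` and
`q̂₊ = ((ê'/ê)(1 + δ₃))·q̂'·(1 + δ₄)`, one has `|q̂₊ − q₊| ≤ γ₂·|q₊| + (1 + γ₂)·ᾱ`. -/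
theorem qd_inner_loop_rounding_error_perturbed_q
    (u : ℝ) (hu : 0 ≤ u) (h2u : 2 * u < 1)
    (e e' q' εe εe' εq' δ₃ δ₄ : ℝ)
    (he : e ≠ 0) (hee : e + εe ≠ 0)
    (hδ₃ : |δ₃| ≤ u) (hδ₄ : |δ₄| ≤ u) :
    |(((e' + εe') / (e + εe)) * (1 + δ₃)) * (q' + εq') * (1 + δ₄) - (e' / e) * q'|
      ≤ gam u 2 * |(e' / e) * q'|
        + (1 + gam u 2) *
          (|e / (e + εe)| *
            (|q'| * |εe'| + |e'| * |εq'| + |(e' / e) * q'| * |εe| + |εq'| * |εe'|) / |e|) := by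
  set γ := gam u 2 with hγdef
  have hpos : (0:ℝ) < 1 - 2 * u := by linarith
  have hγ : γ = 2 * u / (1 - 2 * u) := by
    simp [hγdef, gam]
  have hγ0 : 0 ≤ γ := by
    rw [hγ]; positivity
  -- bound on the combined rounding factor
  have hθ : |(1 + δ₃) * (1 + δ₄) - 1| ≤ γ := by
    have h1 : |(1 + δ₃) * (1 + δ₄) - 1| = |δ₃ + δ₄ + δ₃ * δ₄| := by ring_nf
    rw [h1]
    have h2 : |δ₃ + δ₄ + δ₃ * δ₄| ≤ |δ₃| + |δ₄| + |δ₃| * |δ₄| := by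
      calc |δ₃ + δ₄ + δ₃ * δ₄| ≤ |δ₃ + δ₄| + |δ₃ * δ₄| := abs_add_le _ _
        _ ≤ |δ₃| + |δ₄| + |δ₃| * |δ₄| := by
            rw [abs_mul]; exact add_le_add (abs_add_le _ _) le_rfl
    have h3 : |δ₃| + |δ₄| + |δ₃| * |δ₄| ≤ 2 * u + u * u := by
      nlinarith [abs_nonneg δ₃, abs_nonneg δ₄]
    have h4 : 2 * u + u * u ≤ γ := by
      rw [hγ, le_div_iff₀ hpos]; nlinarith
    linarith
  have habs : |(1 + δ₃) * (1 + δ₄)| ≤ 1 + γ := by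
    calc |(1 + δ₃) * (1 + δ₄)| = |1 + ((1 + δ₃) * (1 + δ₄) - 1)| := by ring_nf
      _ ≤ |(1:ℝ)| + |(1 + δ₃) * (1 + δ₄) - 1| := abs_add_le _ _
      _ ≤ 1 + γ := by rw [abs_one]; linarith
  set qp := (e' / e) * q' with hqp
  set α := |e / (e + εe)| *
      (|q'| * |εe'| + |e'| * |εq'| + |qp| * |εe| + |εq'| * |εe'|) / |e| with hα
  -- the perturbation of the exact product
  have hD : |(e' + εe') / (e + εe) * (q' + εq') - qp| ≤ α := by
    have hid : (e' + εe') / (e + εe) * (q' + εq') - qp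
        = (e / (e + εe)) * ((e' * εq' + εe' * q' + εe' * εq' - εe * qp) / e) := by
      rw [hqp]; field_simp; ring
    rw [hid, abs_mul, abs_div (e' * εq' + εe' * q' + εe' * εq' - εe * qp) e, hα,
      mul_div_assoc]
    gcongr
    calc |e' * εq' + εe' * q' + εe' * εq' - εe * qp|
        ≤ |e' * εq' + εe' * q' + εe' * εq'| + |εe * qp| := abs_sub _ _
      _ ≤ |e' * εq'| + |εe' * q'| + |εe' * εq'| + |εe * qp| := by
          have := abs_add_le (e' * εq' + εe' * q') (εe' * εq')
          have := abs_add_le (e' * εq') (εe' * q')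
          linarith
      _ ≤ |q'| * |εe'| + |e'| * |εq'| + |qp| * |εe| + |εq'| * |εe'| := by
          simp only [abs_mul]; ring_nf; linarith
  -- main decomposition
  have hkey : (((e' + εe') / (e + εe)) * (1 + δ₃)) * (q' + εq') * (1 + δ₄) - qp
      = ((1 + δ₃) * (1 + δ₄) - 1) * qp
        + ((1 + δ₃) * (1 + δ₄)) * ((e' + εe') / (e + εe) * (q' + εq') - qp) := by
    ring
  rw [hkey]
  calc |((1 + δ₃) * (1 + δ₄) - 1) * qp
        + ((1 + δ₃) * (1 + δ₄)) * ((e' + εe') / (e + εe) * (q' + εq') - qp)|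
      ≤ |((1 + δ₃) * (1 + δ₄) - 1) * qp|
        + |((1 + δ₃) * (1 + δ₄)) * ((e' + εe') / (e + εe) * (q' + εq') - qp)| := abs_add_le _ _
    _ = |(1 + δ₃) * (1 + δ₄) - 1| * |qp|
        + |(1 + δ₃) * (1 + δ₄)| * |(e' + εe') / (e + εe) * (q' + εq') - qp| := by
        rw [abs_mul ((1 + δ₃) * (1 + δ₄) - 1) qp, abs_mul ((1 + δ₃) * (1 + δ₄))]
    _ ≤ γ * |qp| + (1 + γ) * α := by
        gcongr
end

section
/- (Monotonicity of the qd condition numbers.) Let q, q', e'', e, e', q₊ be nonzero real numbers satisfying the addition rhombus rule e = q' − q + e'', and let \bar q, \bar q', \bar e'', \bar e' be nonnegative reals. Define \bar e = \bar q' + \bar q + \bar e'' and \bar q₊ = (\bar e'/|e'| + \bar q'/|q'| + \bar e/|e|)·|q₊|. Then: (i) \bar q₊/|q₊| ≥ \bar q'/|q'|; and (ii) if moreover \bar q'/|q'| ≥ \bar e''/|e''| and \bar q/|q| ≥ \bar e''/|e''|, then \bar e/|e| ≥ \bar e''/|e''|. (In the qd table this says that the condition numbers satisfy cond_q_{m+1}^{(n)}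 ≥ cond_q_m^{(n+1)} and cond_e_m^{(n)} ≥ cond_e_{m−1}^{(n+1)}.) -/
/-- Monotonicity of the qd condition numbers.  With nonzero reals satisfying the
addition rhombus rule `e = q' − q + e''`, nonnegative majorants, `\bar e = \bar q' + \bar q + \bar e''`
and `\bar q₊ = (\bar e'/|e'| + \bar q'/|q'| + \bar e/|e|)·|q₊|`, one has
(i) `\bar q₊/|q₊| ≥ \bar q'/|q'|`, and
(ii) if `\bar q'/|q'| ≥ \bar e''/|e''|` and `\bar q/|q| ≥ \bar e''/|e''|`, then
`\bar e/|e| ≥ \bar e''/|e''|`. -/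
theorem qd_condition_number_monotonicity
    (q q' e'' e e' qp : ℝ)
    (hq : q ≠ 0) (hq' : q' ≠ 0) (he'' : e'' ≠ 0) (he : e ≠ 0) (he' : e' ≠ 0) (hqp : qp ≠ 0)
    (hrhombus : e = q' - q + e'')
    (qbar q'bar e''bar e'bar : ℝ)
    (hqbar : 0 ≤ qbar) (hq'bar : 0 ≤ q'bar) (he''bar : 0 ≤ e''bar) (he'bar : 0 ≤ e'bar) :
    ((e'bar / |e'| + q'bar / |q'| + (q'bar + qbar + e''bar) / |e|) * |qp|) / |qp|
        ≥ q'bar / |q'|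
    ∧ (q'bar / |q'| ≥ e''bar / |e''| → qbar / |q| ≥ e''bar / |e''| →
        (q'bar + qbar + e''bar) / |e| ≥ e''bar / |e''|) := by
  have hq'abs : (0:ℝ) < |q'| := abs_pos.mpr hq'
  have hqabs : (0:ℝ) < |q| := abs_pos.mpr hq
  have he''abs : (0:ℝ) < |e''| := abs_pos.mpr he''
  have heabs : (0:ℝ) < |e| := abs_pos.mpr he
  constructor
  · rw [mul_div_assoc, div_self (abs_ne_zero.mpr hqp), mul_one]
    have h1 : 0 ≤ e'bar / |e'| := div_nonneg he'bar (abs_nonneg _)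
    have h2 : 0 ≤ (q'bar + qbar + e''bar) / |e| :=
      div_nonneg (by positivity) (abs_nonneg _)
    linarith
  · intro h1 h2
    set c := e''bar / |e''| with hcdef
    have hc : 0 ≤ c := div_nonneg he''bar (abs_nonneg _)
    have hA : c * |q'| ≤ q'bar := (le_div_iff₀ hq'abs).mp h1
    have hB : c * |q| ≤ qbar := (le_div_iff₀ hqabs).mp h2
    have hC : c * |e''| = e''bar := by
      rw [hcdef, div_mul_cancel₀ _ (ne_of_gt he''abs)]
    have htri : |e| ≤ |q'| + |q| + |e''| := by
      rw [hrhombus]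
      calc |q' - q + e''| ≤ |q' - q| + |e''| := abs_add_le _ _
        _ ≤ |q'| + |q| + |e''| := by
          have := abs_sub q' q
          linarith [abs_sub_abs_le_abs_sub q' q, abs_sub q' q]
    rw [ge_iff_le, le_div_iff₀ heabs]
    nlinarith [mul_le_mul_of_nonneg_left htri hc]
end

section
/- (Exact formula for the compensated term of the q-step of Compqd.) Let e, e', q', q₊ be real numbers with e ≠ 0 and q₊·e = q'·e' (the product rhombus rule). Let εe, εe', εq' be reals and set ê = e + εe, ê' = e' + εe', q̂' = q' + εq'. Let t, μ₃, μ₄ be reals with t·ê + μ₃ = ê' and define q̂₊ = t·q̂' − μ₄. Then the compensated term εq₊ := q̂₊ − q₊ satisfies εq₊ = (εq'·e' + εe'·q̂' − εe·q̂₊ − μ₃·q̂' − μ₄·ê)/e. -/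
/-- Exact formula for the compensated term of the q-step of Compqd.  With `e ≠ 0`,
the product rhombus rule `q₊·e = q'·e'`, `ê = e + εe`, `ê' = e' + εe'`, `q̂' = q' + εq'`,
the error-free transformation relation `t·ê + μ₃ = ê'` and `q̂₊ = t·q̂' − μ₄`, the
compensated term `εq₊ := q̂₊ − q₊` satisfies
`εq₊ = (εq'·e' + εe'·q̂' − εe·q̂₊ − μ₃·q̂' − μ₄·ê)/e`. -/
theorem compqd_q_step_compensated_term
    (e e' q' qp εe εe' εq' t μ₃ μ₄ : ℝ)
    (he : e ≠ 0)
    (hrule : qp * e = q' * e')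
    (ht : t * (e + εe) + μ₃ = e' + εe') :
    (t * (q' + εq') - μ₄) - qp
      = (εq' * e' + εe' * (q' + εq') - εe * (t * (q' + εq') - μ₄)
          - μ₃ * (q' + εq') - μ₄ * (e + εe)) / e := by
  field_simp
  linear_combination (q' + εq') * ht - hrule
end

section
/- (Lemma 5.1: perturbation bounds for the compensated terms.) (a) Let εq, εq', εe'', μ₁, μ₂ and εεq, εεq', εεe'' be real numbers; set ε̂q = εq + εεq, ε̂q' = εq' + εεq', ε̂e'' = εe'' + εεe'', εe = εq' − εq + εe'' − μ₁ − μ₂ and ε̃e* = ε̂q' − ε̂q + ε̂e'' − μ₁ − μ₂. Then |ε̃e* − εe| ≤ |εεq'| + |εεq| + |εεe''|. (b) Let e, e', q', q₊ be reals with e ≠ 0 and q₊·e = q'·e'; let εe, εe', εq' be reals and set ê = e + εe, ê' = e' + εe', q̂' = q' + εq'; let t, μ₃, μ₄ be reals with t·ê + μ₃ = ê' and q̂₊ = t·q̂' − μ₄, and set εq₊ = q̂₊ − q₊. Let εεe, εεe', εεq' be reals with e ≠ εεe; set ε̂e = εe + εεe, ε̂e' = εe' + εεe', ε̂q' = εq'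 + εεq', d = |e/(e − εεe)|, and ε̃q* = (ε̂q'·ê' + ε̂e'·q̂' − ε̂e·q̂₊ − ε̂q'·ε̂e' − μ₃·q̂' − μ₄·ê)/(ê − ε̂e). Then |ε̃q* − εq₊| ≤ d·(|q'|·|εεe'| + |e'|·|εεq'| + |q₊|·|εεe| + |εεq'|·|εεe'|)/|e|. -/
/-- Lemma 5.1: perturbation bounds for the compensated terms of Compqd.
Part (a): with `ε̂q = εq + εεq`, `ε̂q' = εq' + εεq'`, `ε̂e'' = εe'' + εεe''`,
`εe = εq' − εq + εe'' − μ₁ − μ₂` and `ε̃e* = ε̂q' − ε̂q + ε̂e'' − μ₁ − μ₂`, one has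
`|ε̃e* − εe| ≤ |εεq'| + |εεq| + |εεe''|`.
Part (b): with `e ≠ 0`, `q₊·e = q'·e'`, `ê = e + εe`, `ê' = e' + εe'`, `q̂' = q' + εq'`,
`t·ê + μ₃ = ê'`, `q̂₊ = t·q̂' − μ₄`, `εq₊ = q̂₊ − q₊`, `e ≠ εεe`, `ε̂e = εe + εεe`,
`ε̂e' = εe' + εεe'`, `ε̂q' = εq' + εεq'`, `d = |e/(e − εεe)|` and
`ε̃q* = (ε̂q'·ê' + ε̂e'·q̂' − ε̂e·q̂₊ − ε̂q'·ε̂e' − μ₃·q̂' − μ₄·ê)/(ê − ε̂e)`, one has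
`|ε̃q* − εq₊| ≤ d·(|q'|·|εεe'| + |e'|·|εεq'| + |q₊|·|εεe| + |εεq'|·|εεe'|)/|e|`. -/
theorem compqd_compensated_term_perturbation_bounds
    -- part (a) data
    (εq εq' εe'' μ₁ μ₂ εεq εεq' εεe'' : ℝ)
    -- part (b) data
    (e e' q' qp εe εe' εq₁ t μ₃ μ₄ εεe εεe' εεq₁ : ℝ)
    (he : e ≠ 0) (hrule : qp * e = q' * e')
    (ht : t * (e + εe) + μ₃ = e' + εe')
    (hd : e ≠ εεe) :
    (|((εq' + εεq') - (εq + εεq) + (εe'' + εεe'') - μ₁ - μ₂)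
        - (εq' - εq + εe'' - μ₁ - μ₂)|
      ≤ |εεq'| + |εεq| + |εεe''|)
    ∧
    (|((εq₁ + εεq₁) * (e' + εe') + (εe' + εεe') * (q' + εq₁)
          - (εe + εεe) * (t * (q' + εq₁) - μ₄) - (εq₁ + εεq₁) * (εe' + εεe')
          - μ₃ * (q' + εq₁) - μ₄ * (e + εe)) / ((e + εe) - (εe + εεe))
        - ((t * (q' + εq₁) - μ₄) - qp)|
      ≤ |e / (e - εεe)| *
          (|q'| * |εεe'| + |e'| * |εεq₁| + |qp| * |εεe| + |εεq₁| * |εεe'|) / |e|) := by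
  constructor
  · have : ((εq' + εεq') - (εq + εεq) + (εe'' + εεe'') - μ₁ - μ₂)
        - (εq' - εq + εe'' - μ₁ - μ₂) = εεq' - εεq + εεe'' := by ring
    rw [this]
    calc |εεq' - εεq + εεe''| ≤ |εεq' - εεq| + |εεe''| := abs_add_le _ _
      _ ≤ |εεq'| + |εεq| + |εεe''| := by
          have := abs_sub (εεq') (εεq); linarith
  · have hD : e - εεe ≠ 0 := sub_ne_zero.mpr hd
    set N := ((εq₁ + εεq₁) * (e' + εe') + (εe' + εεe') * (q' + εq₁)
          - (εe + εεe) * (t * (q' + εq₁) - μ₄) - (εq₁ + εεq₁) * (εe' + εεe')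
          - μ₃ * (q' + εq₁) - μ₄ * (e + εe)) with hN
    have hμ3 : μ₃ = (e' + εe') - t * (e + εe) := by linarith
    have key : e * (N - ((t * (q' + εq₁) - μ₄) - qp) * (e - εεe))
        = e * (q' * εεe' + e' * εεq₁ - qp * εεe - εεq₁ * εεe') := by
      rw [hN, hμ3]; linear_combination e * hrule
    have key2 : N - ((t * (q' + εq₁) - μ₄) - qp) * (e - εεe)
        = q' * εεe' + e' * εεq₁ - qp * εεe - εεq₁ * εεe' :=
      mul_left_cancel₀ he key
    have hdenom : (e + εe) - (εe + εεe) = e - εεe := by ring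
    rw [hdenom]
    have heq : N / (e - εεe) - ((t * (q' + εq₁) - μ₄) - qp)
        = (q' * εεe' + e' * εεq₁ - qp * εεe - εεq₁ * εεe') / (e - εεe) := by
      field_simp
      linarith [key2]
    rw [heq, abs_div]
    have hrhs : |e / (e - εεe)| *
          (|q'| * |εεe'| + |e'| * |εεq₁| + |qp| * |εεe| + |εεq₁| * |εεe'|) / |e|
        = (|q'| * |εεe'| + |e'| * |εεq₁| + |qp| * |εεe| + |εεq₁| * |εεe'|) / |e - εεe| := by
      rw [abs_div]
      field_simp
    rw [hrhs]
    apply (div_le_div_iff_of_pos_right (abs_pos.mpr hD)).mpr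
    calc |q' * εεe' + e' * εεq₁ - qp * εεe - εεq₁ * εεe'|
        ≤ |q' * εεe' + e' * εεq₁ - qp * εεe| + |εεq₁ * εεe'| := abs_sub _ _
      _ ≤ |q' * εεe' + e' * εεq₁| + |qp * εεe| + |εεq₁ * εεe'| := by
          have := abs_sub (q' * εεe' + e' * εεq₁) (qp * εεe); linarith
      _ ≤ |q' * εεe'| + |e' * εεq₁| + |qp * εεe| + |εεq₁ * εεe'| := by
          have := abs_add_le (q' * εεe') (e' * εεq₁); linarith
      _ = |q'| * |εεe'| + |e'| * |εεq₁| + |qp| * |εεe| + |εεq₁| * |εεe'| := by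
          simp [abs_mul]
end

section
/- (Lemma 5.2, q-part: rounding error of the computed compensated term ε̂q₊.) Let u ≥ 0 with 8u < 1 and γ_k = k·u/(1 − k·u). Let ê, ê', q̂', ε̂e, ε̂e', ε̂q' be reals with ê ≠ 0, ê ≠ ε̂e, |ε̂e| ≤ u·|ê − ε̂e|, |ε̂e'| ≤ u·|ê' − ε̂e'| and |ε̂q'| ≤ u·|q̂' − ε̂q'|. Let t, μ₃, μ₄, q̂₊ be reals with t = (ê'/ê)(1 + δ₃) for some |δ₃| ≤ u, t·ê + μ₃ = ê', |μ₃| ≤ u·|ê'|, q̂₊ = t·q̂' − μ₄ and |μ₄| ≤ u·|q̂₊|. Suppose ε̂q₊ = (ε̂q'·ê'(1 + θ_a) + ε̂e'·q̂'(1 + θ_b) − ε̂e·q̂₊(1 + θ_c) − μ₃·q̂'(1 + θ_d) − μ₄·ê(1 + θ_e))/(ê − ε̂e) with |θ_a| ≤ γ₇, |θ_b| ≤ γ₇, |θ_c| ≤ γ₆, |θ_d| ≤ γ₅, |θ_e| ≤ γ₄, and set ε̃q* = (ε̂q'·ê' + ε̂e'·q̂' − ε̂e·q̂₊ − ε̂q'·ε̂e'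 − μ₃·q̂' − μ₄·ê)/(ê − ε̂e). Then |ε̂q₊ − ε̃q*| ≤ γ₇·γ₈·|q̂' − ε̂q'|·|ê' − ε̂e'|/|ê − ε̂e|. -/
lemma scalar_key (u Q E P : ℝ) (hu : 0 ≤ u) (h8 : 8 * u < 1)
    (hQ : 0 ≤ Q) (hE : 0 ≤ E) (hP : 0 ≤ P)
    (hA : (1-u)^2 * P ≤ (1+u)^3 * (Q * E)) :
    gam u 7 * (u*Q) * ((1+u)*E) + gam u 7 * (u*E) * ((1+u)*Q) + gam u 6 * (u*P)
      + gam u 5 * ((u*(1+u)*E) * ((1+u)*Q)) + gam u 4 * (u*((1+u)*P)) + u^2*(Q*E)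
      ≤ gam u 7 * gam u 8 * (Q * E) := by
  have h7 : (0:ℝ) < 1 - 7*u := by linarith
  have h6 : (0:ℝ) < 1 - 6*u := by linarith
  have h5 : (0:ℝ) < 1 - 5*u := by linarith
  have h4 : (0:ℝ) < 1 - 4*u := by linarith
  have h8' : (0:ℝ) < 1 - 8*u := by linarith
  have h1u : (0:ℝ) < 1 - u := by linarith
  set c : ℝ := u / (1 - 7*u) with hc
  have hcn : 0 ≤ c := by positivity
  have g7 : gam u 7 = 7*c := by rw [show gam u 7 = 7*u/(1-7*u) by norm_num [gam]]; ring
  have g6 : gam u 6 ≤ 6*c := by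
    rw [show gam u 6 = 6*u/(1-6*u) by norm_num [gam]]
    rw [show (6:ℝ)*c = 6*u/(1-7*u) by rw [hc]; ring]
    exact div_le_div_of_nonneg_left (by linarith) h7 (by linarith)
  have g5 : gam u 5 ≤ 5*c := by
    rw [show gam u 5 = 5*u/(1-5*u) by norm_num [gam]]
    rw [show (5:ℝ)*c = 5*u/(1-7*u) by rw [hc]; ring]
    exact div_le_div_of_nonneg_left (by linarith) h7 (by linarith)
  have g4 : gam u 4 ≤ 4*c := by
    rw [show gam u 4 = 4*u/(1-4*u) by norm_num [gam]]
    rw [show (4:ℝ)*c = 4*u/(1-7*u) by rw [hc]; ring]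
    exact div_le_div_of_nonneg_left (by linarith) h7 (by linarith)
  have g8 : 8*u ≤ gam u 8 := by
    rw [show gam u 8 = 8*u/(1-8*u) by norm_num [gam]]
    rw [le_div_iff₀ h8']
    nlinarith
  -- reduce to: LHS ≤ c*u*56*(Q*E) ≤ 7*c*(8*u)*(Q*E) ≤ γ7*γ8*QE
  have hu2 : u^2 = c * (u * (1-7*u)) := by rw [hc, div_mul_eq_mul_div, eq_div_iff h7.ne']; ring
  have step1 : gam u 7 * (u*Q) * ((1+u)*E) + gam u 7 * (u*E) * ((1+u)*Q) + gam u 6 * (u*P)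
      + gam u 5 * ((u*(1+u)*E) * ((1+u)*Q)) + gam u 4 * (u*((1+u)*P)) + u^2*(Q*E)
      ≤ c * (u * (14*(1+u)*(Q*E) + 5*(1+u)^2*(Q*E) + (1-7*u)*(Q*E) + (6+4*(1+u))*P)) := by
    rw [g7, hu2]
    have hQE : 0 ≤ Q*E := mul_nonneg hQ hE
    nlinarith [mul_le_mul_of_nonneg_right g6 (mul_nonneg hu hP),
      mul_le_mul_of_nonneg_right g5 (mul_nonneg (mul_nonneg (mul_nonneg hu (by linarith : (0:ℝ) ≤ 1+u)) hE) (mul_nonneg (by linarith : (0:ℝ) ≤ 1+u) hQ)),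
      mul_le_mul_of_nonneg_right g4 (mul_nonneg hu (mul_nonneg (by linarith : (0:ℝ) ≤ 1+u) hP))]
  have step2 : u * (14*(1+u)*(Q*E) + 5*(1+u)^2*(Q*E) + (1-7*u)*(Q*E) + (6+4*(1+u))*P)
      ≤ u * (56 * (Q*E)) := by
    apply mul_le_mul_of_nonneg_left _ hu
    have hQE : 0 ≤ Q*E := mul_nonneg hQ hE
    nlinarith [mul_le_mul_of_nonneg_left hA (by linarith : (0:ℝ) ≤ 6+4*(1+u)),
      mul_nonneg hQE (mul_nonneg hu hu), sq_nonneg (1-u), mul_nonneg (mul_nonneg hQE hu) hu]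
  have step3 : c * (u * (56 * (Q*E))) ≤ gam u 7 * gam u 8 * (Q*E) := by
    rw [g7]
    have := mul_le_mul_of_nonneg_left g8 (mul_nonneg (by norm_num : (0:ℝ) ≤ 7) hcn)
    nlinarith [mul_nonneg hQ hE, mul_le_mul_of_nonneg_right this (mul_nonneg hQ hE)]
  calc _ ≤ c * (u * (14*(1+u)*(Q*E) + 5*(1+u)^2*(Q*E) + (1-7*u)*(Q*E) + (6+4*(1+u))*P)) := step1
    _ ≤ c * (u * (56*(Q*E))) := mul_le_mul_of_nonneg_left step2 hcn
    _ ≤ _ := step3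

set_option maxHeartbeats 1000000

/-- Lemma 5.2, q-part: rounding error of the computed compensated term `ε̂q₊` of Compqd.
With FastTwoSum-updated inputs (`|ε̂x| ≤ u·|x̂ − ε̂x|`), `t = (ê'/ê)(1 + δ₃)`,
`t·ê + μ₃ = ê'`, `|μ₃| ≤ u·|ê'|`, `q̂₊ = t·q̂' − μ₄`, `|μ₄| ≤ u·|q̂₊|`,
`ε̂q₊ = (ε̂q'·ê'(1 + θ_a) + ε̂e'·q̂'(1 + θ_b) − ε̂e·q̂₊(1 + θ_c) − μ₃·q̂'(1 + θ_d)
  − μ₄·ê(1 + θ_e))/(ê − ε̂e)` and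
`ε̃q* = (ε̂q'·ê' + ε̂e'·q̂' − ε̂e·q̂₊ − ε̂q'·ε̂e' − μ₃·q̂' − μ₄·ê)/(ê − ε̂e)`, one has
`|ε̂q₊ − ε̃q*| ≤ γ₇·γ₈·|q̂' − ε̂q'|·|ê' − ε̂e'|/|ê − ε̂e|`. -/
theorem compqd_computed_compensated_q_rounding
    (u : ℝ) (hu : 0 ≤ u) (h8u : 8 * u < 1)
    (ehat ehat' qhat' eehat eehat' eqhat' : ℝ)
    (hne : ehat ≠ 0) (hne2 : ehat ≠ eehat)
    (h1 : |eehat| ≤ u * |ehat - eehat|)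
    (h2 : |eehat'| ≤ u * |ehat' - eehat'|)
    (h3 : |eqhat'| ≤ u * |qhat' - eqhat'|)
    (t μ₃ μ₄ qhatp δ₃ : ℝ)
    (hδ₃ : |δ₃| ≤ u) (ht : t = (ehat' / ehat) * (1 + δ₃))
    (hdiv : t * ehat + μ₃ = ehat') (hμ₃ : |μ₃| ≤ u * |ehat'|)
    (hqp : qhatp = t * qhat' - μ₄) (hμ₄ : |μ₄| ≤ u * |qhatp|)
    (eqhatp θa θb θc θd θe : ℝ)
    (hθa : |θa| ≤ gam u 7) (hθb : |θb| ≤ gam u 7) (hθc : |θc| ≤ gam u 6)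
    (hθd : |θd| ≤ gam u 5) (hθe : |θe| ≤ gam u 4)
    (hdef : eqhatp = (eqhat' * ehat' * (1 + θa) + eehat' * qhat' * (1 + θb)
        - eehat * qhatp * (1 + θc) - μ₃ * qhat' * (1 + θd)
        - μ₄ * ehat * (1 + θe)) / (ehat - eehat)) :
    |eqhatp - (eqhat' * ehat' + eehat' * qhat' - eehat * qhatp - eqhat' * eehat'
        - μ₃ * qhat' - μ₄ * ehat) / (ehat - eehat)|
      ≤ gam u 7 * gam u 8 * |qhat' - eqhat'| * |ehat' - eehat'| / |ehat - eehat| := by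
  have hsub : ehat - eehat ≠ 0 := sub_ne_zero.mpr hne2
  have hDpos : 0 < |ehat - eehat| := abs_pos.mpr hsub
  set Q := |qhat' - eqhat'| with hQdef
  set E := |ehat' - eehat'| with hEdef
  set D := |ehat - eehat| with hDdef
  have hQ : 0 ≤ Q := abs_nonneg _
  have hE : 0 ≤ E := abs_nonneg _
  have hu1 : u < 1 := by linarith
  have h1u' : (0:ℝ) ≤ 1 + u := by linarith
  -- rewrite the difference
  have hdiff : eqhatp - (eqhat' * ehat' + eehat' * qhat' - eehat * qhatp - eqhat' * eehat'
        - μ₃ * qhat' - μ₄ * ehat) / (ehat - eehat)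
      = (eqhat' * ehat' * θa + eehat' * qhat' * θb - eehat * qhatp * θc
        - μ₃ * qhat' * θd - μ₄ * ehat * θe + eqhat' * eehat') / (ehat - eehat) := by
    rw [hdef]; field_simp; ring
  rw [hdiff, abs_div]
  rw [div_le_div_iff_of_pos_right hDpos]
  -- basic bounds
  have hq'b : |qhat'| ≤ (1+u)*Q := by
    calc |qhat'| = |(qhat' - eqhat') + eqhat'| := by ring_nf
      _ ≤ |qhat' - eqhat'| + |eqhat'| := abs_add_le _ _
      _ ≤ Q + u*Q := by rw [hQdef]; exact add_le_add le_rfl h3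
      _ = (1+u)*Q := by ring
  have he'b : |ehat'| ≤ (1+u)*E := by
    calc |ehat'| = |(ehat' - eehat') + eehat'| := by ring_nf
      _ ≤ |ehat' - eehat'| + |eehat'| := abs_add_le _ _
      _ ≤ E + u*E := by rw [hEdef]; exact add_le_add le_rfl h2
      _ = (1+u)*E := by ring
  have heb : |ehat| ≤ (1+u)*D := by
    calc |ehat| = |(ehat - eehat) + eehat| := by ring_nf
      _ ≤ |ehat - eehat| + |eehat| := abs_add_le _ _
      _ ≤ D + u*D := by rw [hDdef]; exact add_le_add le_rfl h1
      _ = (1+u)*D := by ring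
  have helow : (1-u)*D ≤ |ehat| := by
    have : D ≤ |ehat| + |eehat| := by
      rw [hDdef]; exact (abs_sub _ _)
    nlinarith [h1]
  have hδb : |1 + δ₃| ≤ 1 + u := by
    calc |1 + δ₃| ≤ |(1:ℝ)| + |δ₃| := abs_add_le _ _
      _ ≤ 1 + u := by rw [abs_one]; linarith
  have htE : |t| * |ehat| ≤ (1+u)*((1+u)*E) := by
    have hte : t * ehat = ehat' * (1 + δ₃) := by rw [ht]; field_simp
    calc |t| * |ehat| = |t * ehat| := (abs_mul _ _).symm
      _ = |ehat'| * |1 + δ₃| := by rw [hte, abs_mul]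
      _ ≤ ((1+u)*E) * (1+u) := mul_le_mul he'b hδb (abs_nonneg _) (mul_nonneg h1u' hE)
      _ = (1+u)*((1+u)*E) := by ring
  have hqpb : (1-u)*|qhatp| ≤ |t| * |qhat'| := by
    have : |qhatp| ≤ |t| * |qhat'| + |μ₄| := by
      calc |qhatp| = |t * qhat' - μ₄| := by rw [hqp]
        _ ≤ |t * qhat'| + |μ₄| := abs_sub _ _
        _ = |t| * |qhat'| + |μ₄| := by rw [abs_mul]
    nlinarith [hμ₄]
  set P := |qhatp| * D with hPdef
  have hP : 0 ≤ P := mul_nonneg (abs_nonneg _) hDpos.le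
  have hA : (1-u)^2 * P ≤ (1+u)^3 * (Q * E) := by
    have s1 : ((1-u)*|qhatp|) * ((1-u)*D) ≤ (|t| * |qhat'|) * |ehat| :=
      mul_le_mul hqpb helow (mul_nonneg (by linarith) hDpos.le)
        (mul_nonneg (abs_nonneg _) (abs_nonneg _))
    have s2 : (|t| * |ehat|) * |qhat'| ≤ ((1+u)*((1+u)*E)) * ((1+u)*Q) :=
      mul_le_mul htE hq'b (abs_nonneg _) (mul_nonneg h1u' (mul_nonneg h1u' hE))
    calc (1-u)^2 * P = ((1-u)*|qhatp|) * ((1-u)*D) := by rw [hPdef]; ring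
      _ ≤ (|t| * |qhat'|) * |ehat| := s1
      _ = (|t| * |ehat|) * |qhat'| := by ring
      _ ≤ ((1+u)*((1+u)*E)) * ((1+u)*Q) := s2
      _ = (1+u)^3 * (Q*E) := by ring
  -- gam nonnegativity
  have g7n : 0 ≤ gam u 7 := (abs_nonneg θa).trans hθa
  have g6n : 0 ≤ gam u 6 := (abs_nonneg θc).trans hθc
  have g5n : 0 ≤ gam u 5 := (abs_nonneg θd).trans hθd
  have g4n : 0 ≤ gam u 4 := (abs_nonneg θe).trans hθe
  -- individual term bounds
  have b1 : |eqhat' * ehat' * θa| ≤ gam u 7 * (u*Q) * ((1+u)*E) := by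
    rw [abs_mul, abs_mul]
    calc |eqhat'| * |ehat'| * |θa| ≤ (u*Q) * ((1+u)*E) * gam u 7 := by
          apply mul_le_mul _ hθa (abs_nonneg _)
            (mul_nonneg (mul_nonneg hu hQ) (mul_nonneg h1u' hE))
          exact mul_le_mul h3 he'b (abs_nonneg _) (mul_nonneg hu hQ)
      _ = gam u 7 * (u*Q) * ((1+u)*E) := by ring
  have b2 : |eehat' * qhat' * θb| ≤ gam u 7 * (u*E) * ((1+u)*Q) := by
    rw [abs_mul, abs_mul]
    calc |eehat'| * |qhat'| * |θb| ≤ (u*E) * ((1+u)*Q) * gam u 7 := by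
          apply mul_le_mul _ hθb (abs_nonneg _)
            (mul_nonneg (mul_nonneg hu hE) (mul_nonneg h1u' hQ))
          exact mul_le_mul h2 hq'b (abs_nonneg _) (mul_nonneg hu hE)
      _ = gam u 7 * (u*E) * ((1+u)*Q) := by ring
  have b3 : |eehat * qhatp * θc| ≤ gam u 6 * (u*P) := by
    rw [abs_mul, abs_mul]
    calc |eehat| * |qhatp| * |θc| ≤ (u*D) * |qhatp| * gam u 6 := by
          apply mul_le_mul _ hθc (abs_nonneg _)
            (mul_nonneg (mul_nonneg hu hDpos.le) (abs_nonneg _))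
          exact mul_le_mul_of_nonneg_right h1 (abs_nonneg _)
      _ = gam u 6 * (u*P) := by rw [hPdef]; ring
  have b4 : |μ₃ * qhat' * θd| ≤ gam u 5 * ((u*(1+u)*E) * ((1+u)*Q)) := by
    rw [abs_mul, abs_mul]
    have hμ₃' : |μ₃| ≤ u*(1+u)*E := by
      calc |μ₃| ≤ u * |ehat'| := hμ₃
        _ ≤ u * ((1+u)*E) := mul_le_mul_of_nonneg_left he'b hu
        _ = u*(1+u)*E := by ring
    calc |μ₃| * |qhat'| * |θd| ≤ ((u*(1+u)*E) * ((1+u)*Q)) * gam u 5 := by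
          apply mul_le_mul _ hθd (abs_nonneg _)
            (mul_nonneg (mul_nonneg (mul_nonneg hu h1u') hE) (mul_nonneg h1u' hQ))
          exact mul_le_mul hμ₃' hq'b (abs_nonneg _) (mul_nonneg (mul_nonneg hu h1u') hE)
      _ = gam u 5 * ((u*(1+u)*E) * ((1+u)*Q)) := by ring
  have b5 : |μ₄ * ehat * θe| ≤ gam u 4 * (u*((1+u)*P)) := by
    rw [abs_mul, abs_mul]
    calc |μ₄| * |ehat| * |θe| ≤ ((u*|qhatp|) * ((1+u)*D)) * gam u 4 := by
          apply mul_le_mul _ hθe (abs_nonneg _)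
            (mul_nonneg (mul_nonneg hu (abs_nonneg _)) (mul_nonneg h1u' hDpos.le))
          exact mul_le_mul hμ₄ heb (abs_nonneg _) (mul_nonneg hu (abs_nonneg _))
      _ = gam u 4 * (u*((1+u)*P)) := by rw [hPdef]; ring
  have b6 : |eqhat' * eehat'| ≤ u^2*(Q*E) := by
    rw [abs_mul]
    calc |eqhat'| * |eehat'| ≤ (u*Q) * (u*E) :=
        mul_le_mul h3 h2 (abs_nonneg _) (mul_nonneg hu hQ)
      _ = u^2*(Q*E) := by ring
  -- triangle inequality
  have htri : |eqhat' * ehat' * θa + eehat' * qhat' * θb - eehat * qhatp * θc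
      - μ₃ * qhat' * θd - μ₄ * ehat * θe + eqhat' * eehat'|
      ≤ |eqhat' * ehat' * θa| + |eehat' * qhat' * θb| + |eehat * qhatp * θc|
      + |μ₃ * qhat' * θd| + |μ₄ * ehat * θe| + |eqhat' * eehat'| := by
    refine abs_le.mpr ⟨?_, ?_⟩
    · linarith [neg_abs_le (eqhat' * ehat' * θa), neg_abs_le (eehat' * qhat' * θb),
        le_abs_self (eehat * qhatp * θc), le_abs_self (μ₃ * qhat' * θd),
        le_abs_self (μ₄ * ehat * θe), neg_abs_le (eqhat' * eehat')]
    · linarith [le_abs_self (eqhat' * ehat' * θa), le_abs_self (eehat' * qhat' * θb),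
        neg_abs_le (eehat * qhatp * θc), neg_abs_le (μ₃ * qhat' * θd),
        neg_abs_le (μ₄ * ehat * θe), le_abs_self (eqhat' * eehat')]
  have hkey := scalar_key u Q E P hu h8u hQ hE hP hA
  calc |eqhat' * ehat' * θa + eehat' * qhat' * θb - eehat * qhatp * θc
      - μ₃ * qhat' * θd - μ₄ * ehat * θe + eqhat' * eehat'|
      ≤ |eqhat' * ehat' * θa| + |eehat' * qhat' * θb| + |eehat * qhatp * θc|
        + |μ₃ * qhat' * θd| + |μ₄ * ehat * θe| + |eqhat' * eehat'| := htri
    _ ≤ gam u 7 * (u*Q) * ((1+u)*E) + gam u 7 * (u*E) * ((1+u)*Q) + gam u 6 * (u*P)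
        + gam u 5 * ((u*(1+u)*E) * ((1+u)*Q)) + gam u 4 * (u*((1+u)*P)) + u^2*(Q*E) := by
        linarith [b1, b2, b3, b4, b5, b6]
    _ ≤ gam u 7 * gam u 8 * (Q * E) := hkey
    _ = gam u 7 * gam u 8 * Q * E := by ring
end

section
/- (Lemma 5.3, e-part: rounding error bound for the compensated e-term with perturbed inputs.) Let u ≥ 0 with 4u < 1 and γ_k = k·u/(1 − k·u). Let q, q', e'' be reals with e = q' − q + e''. Let εq, εq', εe'' and εεq, εεq', εεe'' be reals; set q̂ = q + εq, q̂' = q' + εq', ê'' = e'' + εe'', ε̂q = εq + εεq, ε̂q' = εq' + εεq', ε̂e'' = εe'' + εεe''. Assume |ε̂q| ≤ u·|q̂ − ε̂q|, |ε̂q'| ≤ u·|q̂' − ε̂q'| and |ε̂e''| ≤ u·|ê'' − ε̂e''|. Suppose s = (q̂' − q̂)(1 + θ₀) with |θ₀| ≤ u, μ₁ = (q̂' − q̂) − s, |μ₂| ≤ u·|s + ê''|, and set εe = εq' − εq + εe'' − μ₁ − μ₂. Suppose the computed compensated term is ε̂e = ε̂q'(1 + θ_a) − ε̂q(1 + θ_b)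 + ε̂e''(1 + θ_c) − μ₁(1 + θ_d) − μ₂(1 + θ_e) with |θ_a| ≤ γ₄, |θ_b| ≤ γ₄, |θ_c| ≤ γ₃, |θ_d| ≤ γ₂, |θ_e| ≤ γ₁. Then |ε̂e − εe| ≤ γ₃·γ₄·(|q'| + |q| + |e''|) + (1 + γ₃·γ₄)·(|εεq'| + |εεq| + |εεe''|). -/
private lemma tri (a b : ℝ) : |a - b| ≤ |a| + |b| := by
  calc |a - b| = |a + (-b)| := by ring_nf
    _ ≤ |a| + |(-b)| := abs_add_le _ _
    _ = |a| + |b| := by rw [abs_neg]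

private lemma coef1 (u : ℝ) (hu : 0 ≤ u) (h4u : 4 * u < 1) :
    4*u/(1-4*u) * u + 2*u/(1-2*u) * (u*(1+u)) + u/(1-u) * (u*(1+u)^2)
      ≤ 3*u/(1-3*u) * (4*u/(1-4*u)) := by
  have hu1 : (0:ℝ) < 1 - u := by linarith
  have hu2 : (0:ℝ) < 1 - 2*u := by linarith
  have hu3 : (0:ℝ) < 1 - 3*u := by linarith
  have hu4 : (0:ℝ) < 1 - 4*u := by linarith
  rw [← sub_nonneg]
  have key : 3*u/(1-3*u) * (4*u/(1-4*u))
      - (4*u/(1-4*u) * u + 2*u/(1-2*u) * (u*(1+u)) + u/(1-u) * (u*(1+u)^2))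
      = (u^2*(5 + 9*u - 51*u^2 - 9*u^3 + 46*u^4 + 24*u^5))
        / ((1-u)*(1-2*u)*(1-3*u)*(1-4*u)) := by
    rw [div_mul_div_comm, div_mul_eq_mul_div, div_mul_eq_mul_div, div_mul_eq_mul_div,
      div_add_div _ _ hu4.ne' hu2.ne', div_add_div _ _ (mul_ne_zero hu4.ne' hu2.ne') hu1.ne',
      div_sub_div _ _ (mul_ne_zero hu3.ne' hu4.ne') (mul_ne_zero (mul_ne_zero hu4.ne' hu2.ne') hu1.ne'),
      div_eq_div_iff (by positivity) (by positivity)]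
    ring
  rw [key]
  apply div_nonneg
  · have h2 : u ≤ 1/4 := by linarith
    nlinarith [sq_nonneg u, mul_nonneg hu hu, mul_nonneg (mul_nonneg hu hu) hu,
      mul_nonneg (mul_nonneg (mul_nonneg hu hu) hu) hu,
      mul_nonneg (mul_nonneg (mul_nonneg (mul_nonneg hu hu) hu) hu) hu]
  · positivity

private lemma coef2 (u : ℝ) (hu : 0 ≤ u) (h4u : 4 * u < 1) :
    3*u/(1-3*u) * u + u/(1-u) * (u*(1+u))
      ≤ 3*u/(1-3*u) * (4*u/(1-4*u)) := by
  have hu1 : (0:ℝ) < 1 - u := by linarith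
  have hu2 : (0:ℝ) < 1 - 2*u := by linarith
  have hu3 : (0:ℝ) < 1 - 3*u := by linarith
  have hu4 : (0:ℝ) < 1 - 4*u := by linarith
  rw [← sub_nonneg]
  have key : 3*u/(1-3*u) * (4*u/(1-4*u)) - (3*u/(1-3*u) * u + u/(1-u) * (u*(1+u)))
      = (u^2*(8 + 9*u - 17*u^2 - 12*u^3))
        / ((1-u)*(1-3*u)*(1-4*u)) := by
    rw [div_mul_div_comm, div_mul_eq_mul_div, div_mul_eq_mul_div,
      div_add_div _ _ hu3.ne' hu1.ne',
      div_sub_div _ _ (mul_ne_zero hu3.ne' hu4.ne') (mul_ne_zero hu3.ne' hu1.ne'),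
      div_eq_div_iff (by positivity) (by positivity)]
    ring
  rw [key]
  apply div_nonneg
  · nlinarith [mul_nonneg hu hu, mul_nonneg (mul_nonneg hu hu) hu,
      mul_nonneg (mul_nonneg (mul_nonneg hu hu) hu) hu]
  · positivity

/-- Lemma 5.3, e-part: rounding error bound for the compensated e-term of Compqd with
perturbed inputs.  With `e = q' − q + e''`, hatted quantities `x̂ = x + εx`, computed
compensated terms `ε̂x = εx + εεx` satisfying the FastTwoSum property
`|ε̂x| ≤ u·|x̂ − ε̂x|`, `s = (q̂' − q̂)(1 + θ₀)`, `μ₁ = (q̂' − q̂) − s`,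
`|μ₂| ≤ u·|s + ê''|`, `εe = εq' − εq + εe'' − μ₁ − μ₂` and
`ε̂e = ε̂q'(1 + θ_a) − ε̂q(1 + θ_b) + ε̂e''(1 + θ_c) − μ₁(1 + θ_d) − μ₂(1 + θ_e)`,
one has `|ε̂e − εe| ≤ γ₃·γ₄·(|q'| + |q| + |e''|) + (1 + γ₃·γ₄)·(|εεq'| + |εεq| + |εεe''|)`. -/
theorem compqd_compensated_e_rounding_perturbed
    (u : ℝ) (hu : 0 ≤ u) (h4u : 4 * u < 1)
    (q q' e'' : ℝ)
    (εq εq' εe'' εεq εεq' εεe'' : ℝ)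
    (qhat qhat' ehat'' eqhat eqhat' eehat'' : ℝ)
    (hqhat : qhat = q + εq) (hqhat' : qhat' = q' + εq') (hehat'' : ehat'' = e'' + εe'')
    (heqhat : eqhat = εq + εεq) (heqhat' : eqhat' = εq' + εεq')
    (heehat'' : eehat'' = εe'' + εεe'')
    (h1 : |eqhat| ≤ u * |qhat - eqhat|)
    (h2 : |eqhat'| ≤ u * |qhat' - eqhat'|)
    (h3 : |eehat''| ≤ u * |ehat'' - eehat''|)
    (s θ₀ μ₁ μ₂ : ℝ)
    (hθ₀ : |θ₀| ≤ u) (hs : s = (qhat' - qhat) * (1 + θ₀))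
    (hμ₁ : μ₁ = (qhat' - qhat) - s)
    (hμ₂ : |μ₂| ≤ u * |s + ehat''|)
    (eehat θa θb θc θd θe : ℝ)
    (hθa : |θa| ≤ gam u 4) (hθb : |θb| ≤ gam u 4) (hθc : |θc| ≤ gam u 3)
    (hθd : |θd| ≤ gam u 2) (hθe : |θe| ≤ gam u 1)
    (hdef : eehat = eqhat' * (1 + θa) - eqhat * (1 + θb) + eehat'' * (1 + θc)
        - μ₁ * (1 + θd) - μ₂ * (1 + θe)) :
    |eehat - (εq' - εq + εe'' - μ₁ - μ₂)|
      ≤ gam u 3 * gam u 4 * (|q'| + |q| + |e''|)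
        + (1 + gam u 3 * gam u 4) * (|εεq'| + |εεq| + |εεe''|) := by
  have hg1 : gam u 1 = u/(1-u) := by norm_num [gam]
  have hg2 : gam u 2 = 2*u/(1-2*u) := by norm_num [gam]
  have hg3 : gam u 3 = 3*u/(1-3*u) := by norm_num [gam]
  have hg4 : gam u 4 = 4*u/(1-4*u) := by norm_num [gam]
  set X := |q'| + |εεq'| with hX
  set Y := |q| + |εεq| with hY
  set Z := |e''| + |εεe''| with hZ
  have hXnn : 0 ≤ X := by positivity
  have hYnn : 0 ≤ Y := by positivity
  have hZnn : 0 ≤ Z := by positivity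
  -- FastTwoSum consequences
  have B2 : |eqhat'| ≤ u * X := by
    refine h2.trans ?_
    have : qhat' - eqhat' = q' - εεq' := by rw [hqhat', heqhat']; ring
    rw [this]; exact mul_le_mul_of_nonneg_left (tri _ _) hu
  have B1 : |eqhat| ≤ u * Y := by
    refine h1.trans ?_
    have : qhat - eqhat = q - εεq := by rw [hqhat, heqhat]; ring
    rw [this]; exact mul_le_mul_of_nonneg_left (tri _ _) hu
  have B3 : |eehat''| ≤ u * Z := by
    refine h3.trans ?_
    have : ehat'' - eehat'' = e'' - εεe'' := by rw [hehat'', heehat'']; ring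
    rw [this]; exact mul_le_mul_of_nonneg_left (tri _ _) hu
  -- bound on the difference
  have hDeq : qhat' - qhat = (q' - εεq') - (q - εεq) + eqhat' - eqhat := by
    rw [hqhat, hqhat', heqhat, heqhat']; ring
  have hD : |qhat' - qhat| ≤ (1+u) * (X + Y) := by
    rw [hDeq]
    calc |(q' - εεq') - (q - εεq) + eqhat' - eqhat|
        ≤ |(q' - εεq') - (q - εεq) + eqhat'| + |eqhat| := tri _ _
      _ ≤ (|(q' - εεq') - (q - εεq)| + |eqhat'|) + |eqhat| := by
          gcongr; exact abs_add_le _ _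
      _ ≤ ((|q' - εεq'| + |q - εεq|) + |eqhat'|) + |eqhat| := by
          gcongr; exact tri _ _
      _ ≤ ((X + Y) + u * X) + u * Y := by
          have t1 := tri q' εεq'
          have t2 := tri q εεq
          rw [hX, hY]; gcongr <;> linarith
      _ = (1+u) * (X + Y) := by ring
  have hμ₁' : |μ₁| ≤ u * ((1+u) * (X + Y)) := by
    have : μ₁ = -((qhat' - qhat) * θ₀) := by rw [hμ₁, hs]; ring
    rw [this, abs_neg, abs_mul]
    calc |qhat' - qhat| * |θ₀| ≤ ((1+u) * (X+Y)) * u := by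
          apply mul_le_mul hD hθ₀ (abs_nonneg _) (by positivity)
      _ = u * ((1+u) * (X + Y)) := by ring
  have hehat''abs : |ehat''| ≤ (1+u) * Z := by
    have : ehat'' = (e'' - εεe'') + eehat'' := by rw [hehat'', heehat'']; ring
    rw [this]
    calc |(e'' - εεe'') + eehat''| ≤ |e'' - εεe''| + |eehat''| := abs_add_le _ _
      _ ≤ Z + u * Z := by gcongr; exact tri _ _
      _ = (1+u) * Z := by ring
  have hsabs : |s| ≤ (1+u) * ((1+u) * (X + Y)) := by
    rw [hs, abs_mul]
    have h1θ : |1 + θ₀| ≤ 1 + u := by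
      calc |1 + θ₀| ≤ |(1:ℝ)| + |θ₀| := abs_add_le _ _
        _ ≤ 1 + u := by rw [abs_one]; linarith
    calc |qhat' - qhat| * |1 + θ₀| ≤ ((1+u) * (X+Y)) * (1+u) :=
          mul_le_mul hD h1θ (abs_nonneg _) (by positivity)
      _ = (1+u) * ((1+u) * (X + Y)) := by ring
  have hμ₂' : |μ₂| ≤ u * ((1+u)^2 * (X + Y) + (1+u) * Z) := by
    refine hμ₂.trans ?_
    have : |s + ehat''| ≤ (1+u)^2 * (X + Y) + (1+u) * Z := by
      calc |s + ehat''| ≤ |s| + |ehat''| := abs_add_le _ _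
        _ ≤ (1+u) * ((1+u) * (X + Y)) + (1+u) * Z := by gcongr
        _ = (1+u)^2 * (X + Y) + (1+u) * Z := by ring
    exact mul_le_mul_of_nonneg_left this hu
  -- decomposition of the error
  have hkey : eehat - (εq' - εq + εe'' - μ₁ - μ₂)
      = εεq' - εεq + εεe'' + eqhat' * θa - eqhat * θb + eehat'' * θc
        - μ₁ * θd - μ₂ * θe := by
    rw [hdef, heqhat, heqhat', heehat'']; ring
  -- gamma nonneg
  have hg1nn : 0 ≤ gam u 1 := le_trans (abs_nonneg _) hθe |>.trans (le_refl _)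
  have hg2nn : 0 ≤ gam u 2 := le_trans (abs_nonneg _) hθd
  have hg3nn : 0 ≤ gam u 3 := le_trans (abs_nonneg _) hθc
  have hg4nn : 0 ≤ gam u 4 := le_trans (abs_nonneg _) hθa
  -- triangle inequality on the decomposition
  have main : |eehat - (εq' - εq + εe'' - μ₁ - μ₂)|
      ≤ (|εεq'| + |εεq| + |εεe''|)
        + (u * X) * gam u 4 + (u * Y) * gam u 4 + (u * Z) * gam u 3
        + (u * ((1+u) * (X + Y))) * gam u 2
        + (u * ((1+u)^2 * (X + Y) + (1+u) * Z)) * gam u 1 := by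
    rw [hkey]
    have t1 : |eqhat' * θa| ≤ (u * X) * gam u 4 := by
      rw [abs_mul]; exact mul_le_mul B2 hθa (abs_nonneg _) (by positivity)
    have t2 : |eqhat * θb| ≤ (u * Y) * gam u 4 := by
      rw [abs_mul]; exact mul_le_mul B1 hθb (abs_nonneg _) (by positivity)
    have t3 : |eehat'' * θc| ≤ (u * Z) * gam u 3 := by
      rw [abs_mul]; exact mul_le_mul B3 hθc (abs_nonneg _) (by positivity)
    have t4 : |μ₁ * θd| ≤ (u * ((1+u) * (X + Y))) * gam u 2 := by
      rw [abs_mul]; exact mul_le_mul hμ₁' hθd (abs_nonneg _) (by positivity)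
    have t5 : |μ₂ * θe| ≤ (u * ((1+u)^2 * (X + Y) + (1+u) * Z)) * gam u 1 := by
      rw [abs_mul]; exact mul_le_mul hμ₂' hθe (abs_nonneg _) (by positivity)
    have tri8 : |εεq' - εεq + εεe'' + eqhat' * θa - eqhat * θb + eehat'' * θc
        - μ₁ * θd - μ₂ * θe|
        ≤ |εεq'| + |εεq| + |εεe''| + |eqhat' * θa| + |eqhat * θb| + |eehat'' * θc|
          + |μ₁ * θd| + |μ₂ * θe| := by
      calc |εεq' - εεq + εεe'' + eqhat' * θa - eqhat * θb + eehat'' * θc - μ₁ * θd - μ₂ * θe|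
          ≤ |εεq' - εεq + εεe'' + eqhat' * θa - eqhat * θb + eehat'' * θc - μ₁ * θd| + |μ₂ * θe| := tri _ _
        _ ≤ (|εεq' - εεq + εεe'' + eqhat' * θa - eqhat * θb + eehat'' * θc| + |μ₁ * θd|) + |μ₂ * θe| := by gcongr; exact tri _ _
        _ ≤ ((|εεq' - εεq + εεe'' + eqhat' * θa - eqhat * θb| + |eehat'' * θc|) + |μ₁ * θd|) + |μ₂ * θe| := by gcongr; exact abs_add_le _ _
        _ ≤ (((|εεq' - εεq + εεe'' + eqhat' * θa| + |eqhat * θb|) + |eehat'' * θc|) + |μ₁ * θd|) + |μ₂ * θe| := by gcongr; exact tri _ _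
        _ ≤ ((((|εεq' - εεq + εεe''| + |eqhat' * θa|) + |eqhat * θb|) + |eehat'' * θc|) + |μ₁ * θd|) + |μ₂ * θe| := by gcongr; exact abs_add_le _ _
        _ ≤ ((((((|εεq' - εεq| + |εεe''|)) + |eqhat' * θa|) + |eqhat * θb|) + |eehat'' * θc|) + |μ₁ * θd|) + |μ₂ * θe| := by gcongr; exact abs_add_le _ _
        _ ≤ |εεq'| + |εεq| + |εεe''| + |eqhat' * θa| + |eqhat * θb| + |eehat'' * θc| + |μ₁ * θd| + |μ₂ * θe| := by
            have := tri εεq' εεq; linarith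
    linarith [tri8, t1, t2, t3, t4, t5]
  -- coefficient inequalities
  have c1 : gam u 4 * u + gam u 2 * (u*(1+u)) + gam u 1 * (u*(1+u)^2)
      ≤ gam u 3 * gam u 4 := by
    rw [hg1, hg2, hg3, hg4]; exact coef1 u hu h4u
  have c2 : gam u 3 * u + gam u 1 * (u*(1+u)) ≤ gam u 3 * gam u 4 := by
    rw [hg1, hg3, hg4]; exact coef2 u hu h4u
  have cX := mul_le_mul_of_nonneg_right c1 hXnn
  have cY := mul_le_mul_of_nonneg_right c1 hYnn
  have cZ := mul_le_mul_of_nonneg_right c2 hZnn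
  have habsX : |q'| + |q| + |e''| + (|εεq'| + |εεq| + |εεe''|) = X + Y + Z := by
    rw [hX, hY, hZ]; ring
  -- conclude
  have hrearr : (|εεq'| + |εεq| + |εεe''|)
        + (u * X) * gam u 4 + (u * Y) * gam u 4 + (u * Z) * gam u 3
        + (u * ((1+u) * (X + Y))) * gam u 2
        + (u * ((1+u)^2 * (X + Y) + (1+u) * Z)) * gam u 1
      = (|εεq'| + |εεq| + |εεe''|)
        + (gam u 4 * u + gam u 2 * (u*(1+u)) + gam u 1 * (u*(1+u)^2)) * X
        + (gam u 4 * u + gam u 2 * (u*(1+u)) + gam u 1 * (u*(1+u)^2)) * Y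
        + (gam u 3 * u + gam u 1 * (u*(1+u))) * Z := by ring
  have hring : gam u 3 * gam u 4 * (|q'| + |q| + |e''|)
        + (1 + gam u 3 * gam u 4) * (|εεq'| + |εεq| + |εεe''|)
      = (|εεq'| + |εεq| + |εεe''|) + gam u 3 * gam u 4 * X
        + gam u 3 * gam u 4 * Y + gam u 3 * gam u 4 * Z := by
    rw [hX, hY, hZ]; ring
  rw [hring]
  rw [hrearr] at main
  linarith [main, cX, cY, cZ]
end

section
/- (Lemma 5.3, q-part: rounding error bound for the compensated q-term with perturbed inputs.) Let u ≥ 0 with 8u < 1 and γ_k = k·u/(1 − k·u). Let e, e', q', q₊ be reals with e ≠ 0 and q₊·e = q'·e'. Let εe, εe', εq' and εεe, εεe', εεq' be reals with e ≠ εεe; set ê = e + εe, ê' = e' + εe', q̂' = q' + εq', ε̂e = εe + εεe, ε̂e' = εe' + εεe', ε̂q' = εq' + εεq', and assume ê ≠ 0, |ε̂e| ≤ u·|ê − ε̂e|, |ε̂e'| ≤ u·|ê' − ε̂e'|, |ε̂q'| ≤ u·|q̂' − ε̂q'|. Let t, μ₃, μ₄, q̂₊ be reals with t = (ê'/ê)(1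 + δ₃) for some |δ₃| ≤ u, t·ê + μ₃ = ê', |μ₃| ≤ u·|ê'|, q̂₊ = t·q̂' − μ₄, |μ₄| ≤ u·|q̂₊|; set εq₊ = q̂₊ − q₊. Suppose the computed compensated term is ε̂q₊ = (ε̂q'·ê'(1 + θ_a) + ε̂e'·q̂'(1 + θ_b) − ε̂e·q̂₊(1 + θ_c) − μ₃·q̂'(1 + θ_d) − μ₄·ê(1 + θ_e))/(ê − ε̂e) with |θ_a| ≤ γ₇, |θ_b| ≤ γ₇, |θ_c| ≤ γ₆, |θ_d| ≤ γ₅, |θ_e| ≤ γ₄. Then, with d = |e/(e − εεe)| and β̄ = d·(|q'|·|εεe'| + |e'|·|εεq'| + |q₊|·|εεe| + |εεq'|·|εεe'|)/|e|, one has |ε̂q₊ − εq₊| ≤ γ₇·γ₈·d·|q₊| + (1 + γ₇·γ₈)·β̄. -/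
set_option maxHeartbeats 1000000

set_option maxHeartbeats 1000000

lemma aux_a (u : ℝ) (hu : 0 ≤ u) (h8u : 8 * u < 1) :
    u^2 ≤ u^2 / ((1-7*u)*(1-8*u)) := by
  have d7 : (0:ℝ) < 1 - 7*u := by linarith
  have d8 : (0:ℝ) < 1 - 8*u := by linarith
  rw [le_div_iff₀ (by positivity)]
  nlinarith [sq_nonneg u, mul_nonneg (mul_nonneg hu hu) hu]

lemma aux_b (u : ℝ) (hu : 0 ≤ u) (h8u : 8 * u < 1) :
    2*(7*u/(1-7*u))*u*(1+u) ≤ 14*(u^2 / ((1-7*u)*(1-8*u))) := by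
  have d7 : (0:ℝ) < 1 - 7*u := by linarith
  have d8 : (0:ℝ) < 1 - 8*u := by linarith
  rw [show 2*(7*u/(1-7*u))*u*(1+u) = 14*u^2*(1+u)/(1-7*u) from by ring,
    show (14:ℝ)*(u^2/((1-7*u)*(1-8*u))) = 14*u^2/((1-7*u)*(1-8*u)) from by ring,
    div_le_div_iff₀ d7 (by positivity)]
  nlinarith [sq_nonneg u, mul_nonneg (mul_nonneg hu hu) hu,
    mul_nonneg (mul_nonneg (mul_nonneg hu hu) hu) hu]

lemma aux_c (u : ℝ) (hu : 0 ≤ u) (h8u : 8 * u < 1) :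
    (5*u/(1-5*u))*u*(1+u)^2 ≤ 5*(u^2 / ((1-7*u)*(1-8*u))) := by
  have d5 : (0:ℝ) < 1 - 5*u := by linarith
  have d7 : (0:ℝ) < 1 - 7*u := by linarith
  have d8 : (0:ℝ) < 1 - 8*u := by linarith
  rw [show (5*u/(1-5*u))*u*(1+u)^2 = 5*u^2*(1+u)^2/(1-5*u) from by ring,
    show (5:ℝ)*(u^2/((1-7*u)*(1-8*u))) = 5*u^2/((1-7*u)*(1-8*u)) from by ring,
    div_le_div_iff₀ d5 (by positivity)]
  nlinarith [mul_nonneg (mul_nonneg hu hu) hu, sq_nonneg u,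
    mul_nonneg (mul_nonneg (mul_nonneg hu hu) hu) hu,
    mul_nonneg (mul_nonneg (mul_nonneg (mul_nonneg hu hu) hu) hu) hu,
    mul_nonneg (mul_nonneg (mul_nonneg hu hu) hu) d8.le,
    mul_nonneg (mul_nonneg hu hu) d8.le]

lemma aux_d (u : ℝ) (hu : 0 ≤ u) (h8u : 8 * u < 1) :
    (1+u)^3 * ((6*u/(1-6*u))*u) ≤ 6*((1-u)^2 * (u^2 / ((1-7*u)*(1-8*u)))) := by
  have d6 : (0:ℝ) < 1 - 6*u := by linarith
  have d7 : (0:ℝ) < 1 - 7*u := by linarith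
  have d8 : (0:ℝ) < 1 - 8*u := by linarith
  rw [show (1+u)^3 * ((6*u/(1-6*u))*u) = 6*u^2*(1+u)^3/(1-6*u) from by ring,
    show (6:ℝ)*((1-u)^2*(u^2/((1-7*u)*(1-8*u)))) = 6*u^2*(1-u)^2/((1-7*u)*(1-8*u)) from by ring,
    div_le_div_iff₀ d6 (by positivity)]
  nlinarith [mul_nonneg (mul_nonneg hu hu) hu, sq_nonneg u,
    mul_nonneg (mul_nonneg (mul_nonneg hu hu) hu) hu,
    mul_nonneg (mul_nonneg (mul_nonneg (mul_nonneg hu hu) hu) hu) hu,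
    mul_nonneg (mul_nonneg (mul_nonneg (mul_nonneg (mul_nonneg hu hu) hu) hu) hu) hu,
    mul_nonneg (mul_nonneg (mul_nonneg hu hu) hu) d8.le,
    mul_nonneg (mul_nonneg (mul_nonneg (mul_nonneg hu hu) hu) hu) d8.le,
    mul_nonneg (mul_nonneg hu hu) d8.le]

lemma aux_e (u : ℝ) (hu : 0 ≤ u) (h8u : 8 * u < 1) :
    (1+u)^3 * ((4*u/(1-4*u))*u*(1+u)) ≤ 4*((1-u)^2 * (u^2 / ((1-7*u)*(1-8*u)))) := by
  have d4 : (0:ℝ) < 1 - 4*u := by linarith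
  have d7 : (0:ℝ) < 1 - 7*u := by linarith
  have d8 : (0:ℝ) < 1 - 8*u := by linarith
  rw [show (1+u)^3 * ((4*u/(1-4*u))*u*(1+u)) = 4*u^2*(1+u)^4/(1-4*u) from by ring,
    show (4:ℝ)*((1-u)^2*(u^2/((1-7*u)*(1-8*u)))) = 4*u^2*(1-u)^2/((1-7*u)*(1-8*u)) from by ring,
    div_le_div_iff₀ d4 (by positivity)]
  nlinarith [mul_nonneg (mul_nonneg hu hu) hu, sq_nonneg u,
    mul_nonneg (mul_nonneg (mul_nonneg hu hu) hu) hu,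
    mul_nonneg (mul_nonneg (mul_nonneg (mul_nonneg hu hu) hu) hu) hu,
    mul_nonneg (mul_nonneg (mul_nonneg (mul_nonneg (mul_nonneg hu hu) hu) hu) hu) hu,
    mul_nonneg (mul_nonneg (mul_nonneg (mul_nonneg (mul_nonneg (mul_nonneg hu hu) hu) hu) hu) hu) hu,
    mul_nonneg (mul_nonneg (mul_nonneg hu hu) hu) d8.le,
    mul_nonneg (mul_nonneg (mul_nonneg (mul_nonneg hu hu) hu) hu) d8.le,
    mul_nonneg (mul_nonneg (mul_nonneg (mul_nonneg (mul_nonneg hu hu) hu) hu) hu) d8.le,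
    mul_nonneg (mul_nonneg hu hu) d8.le]

/-- Lemma 5.3, q-part: rounding error bound for the compensated q-term of Compqd with
perturbed inputs.  With `e ≠ 0`, the product rhombus rule `q₊·e = q'·e'`, hatted
quantities `x̂ = x + εx`, computed compensated terms `ε̂x = εx + εεx` satisfying the
FastTwoSum property `|ε̂x| ≤ u·|x̂ − ε̂x|`, DivRem/TwoProd relations
`t = (ê'/ê)(1 + δ₃)`, `t·ê + μ₃ = ê'`, `|μ₃| ≤ u·|ê'|`, `q̂₊ = t·q̂' − μ₄`,
`|μ₄| ≤ u·|q̂₊|`, `εq₊ = q̂₊ − q₊`, and the computed compensated term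
`ε̂q₊ = (ε̂q'·ê'(1 + θ_a) + ε̂e'·q̂'(1 + θ_b) − ε̂e·q̂₊(1 + θ_c)
  − μ₃·q̂'(1 + θ_d) − μ₄·ê(1 + θ_e))/(ê − ε̂e)`,
one has, with `d = |e/(e − εεe)|` and
`β̄ = d·(|q'|·|εεe'| + |e'|·|εεq'| + |q₊|·|εεe| + |εεq'|·|εεe'|)/|e|`, the bound
`|ε̂q₊ − εq₊| ≤ γ₇·γ₈·d·|q₊| + (1 + γ₇·γ₈)·β̄`. -/
theorem compqd_compensated_q_rounding_perturbed
    (u : ℝ) (hu : 0 ≤ u) (h8u : 8 * u < 1)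
    (e e' q' qp : ℝ) (he : e ≠ 0) (hrule : qp * e = q' * e')
    (εe εe' εq' εεe εεe' εεq' : ℝ) (hde : e ≠ εεe)
    (ehat ehat' qhat' eehat eehat' eqhat' : ℝ)
    (hehat : ehat = e + εe) (hehat' : ehat' = e' + εe') (hqhat' : qhat' = q' + εq')
    (heehat : eehat = εe + εεe) (heehat' : eehat' = εe' + εεe')
    (heqhat' : eqhat' = εq' + εεq')
    (hne : ehat ≠ 0)
    (h1 : |eehat| ≤ u * |ehat - eehat|)
    (h2 : |eehat'| ≤ u * |ehat' - eehat'|)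
    (h3 : |eqhat'| ≤ u * |qhat' - eqhat'|)
    (t μ₃ μ₄ qhatp δ₃ : ℝ)
    (hδ₃ : |δ₃| ≤ u) (ht : t = (ehat' / ehat) * (1 + δ₃))
    (hdiv : t * ehat + μ₃ = ehat') (hμ₃ : |μ₃| ≤ u * |ehat'|)
    (hqp : qhatp = t * qhat' - μ₄) (hμ₄ : |μ₄| ≤ u * |qhatp|)
    (eqhatp θa θb θc θd θe : ℝ)
    (hθa : |θa| ≤ gam u 7) (hθb : |θb| ≤ gam u 7) (hθc : |θc| ≤ gam u 6)
    (hθd : |θd| ≤ gam u 5) (hθe : |θe| ≤ gam u 4)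
    (hdef : eqhatp = (eqhat' * ehat' * (1 + θa) + eehat' * qhat' * (1 + θb)
        - eehat * qhatp * (1 + θc) - μ₃ * qhat' * (1 + θd)
        - μ₄ * ehat * (1 + θe)) / (ehat - eehat)) :
    |eqhatp - (qhatp - qp)|
      ≤ gam u 7 * gam u 8 * |e / (e - εεe)| * |qp|
        + (1 + gam u 7 * gam u 8) *
          (|e / (e - εεe)| *
            (|q'| * |εεe'| + |e'| * |εεq'| + |qp| * |εεe| + |εεq'| * |εεe'|) / |e|) := by
  have d4 : (0:ℝ) < 1 - 4*u := by linarith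
  have d5 : (0:ℝ) < 1 - 5*u := by linarith
  have d6 : (0:ℝ) < 1 - 6*u := by linarith
  have d7 : (0:ℝ) < 1 - 7*u := by linarith
  have d8 : (0:ℝ) < 1 - 8*u := by linarith
  have g4e : gam u 4 = 4*u/(1-4*u) := by norm_num [gam]
  have g5e : gam u 5 = 5*u/(1-5*u) := by norm_num [gam]
  have g6e : gam u 6 = 6*u/(1-6*u) := by norm_num [gam]
  have g7e : gam u 7 = 7*u/(1-7*u) := by norm_num [gam]
  have g8e : gam u 8 = 8*u/(1-8*u) := by norm_num [gam]
  have g40 : 0 ≤ gam u 4 := by rw [g4e]; positivity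
  have g50 : 0 ≤ gam u 5 := by rw [g5e]; positivity
  have g60 : 0 ≤ gam u 6 := by rw [g6e]; positivity
  have g70 : 0 ≤ gam u 7 := by rw [g7e]; positivity
  have g80 : 0 ≤ gam u 8 := by rw [g8e]; positivity
  set g4 := gam u 4
  set g5 := gam u 5
  set g6 := gam u 6
  set g7 := gam u 7
  set g8 := gam u 8
  have hEne : e - εεe ≠ 0 := sub_ne_zero.mpr hde
  have hE : (0:ℝ) < |e - εεe| := abs_pos.mpr hEne
  set E := |e - εεe| with hEdef
  set A := |q' - εεq'| with hAdef
  set Bp := |e' - εεe'| with hBdef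
  have hA0 : 0 ≤ A := abs_nonneg _
  have hB0 : 0 ≤ Bp := abs_nonneg _
  have hDeq : ehat - eehat = e - εεe := by rw [hehat, heehat]; ring
  have hq'eq : qhat' - eqhat' = q' - εεq' := by rw [hqhat', heqhat']; ring
  have he'eq : ehat' - eehat' = e' - εεe' := by rw [hehat', heehat']; ring
  rw [hDeq] at h1
  rw [hq'eq] at h3
  rw [he'eq] at h2
  -- basic magnitude bounds
  have hqhat'le : |qhat'| ≤ (1+u) * A := by
    have h' : qhat' = (q' - εεq') + eqhat' := by rw [hqhat', heqhat']; ring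
    calc |qhat'| = |(q' - εεq') + eqhat'| := by rw [← h']
      _ ≤ |q' - εεq'| + |eqhat'| := abs_add_le _ _
      _ ≤ A + u * A := add_le_add le_rfl h3
      _ = (1+u) * A := by ring
  have hehat'le : |ehat'| ≤ (1+u) * Bp := by
    have h' : ehat' = (e' - εεe') + eehat' := by rw [hehat', heehat']; ring
    calc |ehat'| = |(e' - εεe') + eehat'| := by rw [← h']
      _ ≤ |e' - εεe'| + |eehat'| := abs_add_le _ _
      _ ≤ Bp + u * Bp := add_le_add le_rfl h2
      _ = (1+u) * Bp := by ring
  have hehatle : |ehat| ≤ (1+u) * E := by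
    have h' : ehat = (e - εεe) + eehat := by rw [hehat, heehat]; ring
    calc |ehat| = |(e - εεe) + eehat| := by rw [← h']
      _ ≤ |e - εεe| + |eehat| := abs_add_le _ _
      _ ≤ E + u * E := add_le_add le_rfl h1
      _ = (1+u) * E := by ring
  have hehatge : (1-u) * E ≤ |ehat| := by
    have h' : |ehat - eehat| ≤ |ehat| + |eehat| := abs_sub _ _
    rw [hDeq, ← hEdef] at h'
    linarith only [h', h1]
  -- bound on t * ehat
  have htehat : t * ehat = ehat' * (1 + δ₃) := by
    rw [ht]; field_simp
  have ht1 : |t| * |ehat| ≤ (1+u) * |ehat'| := by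
    have h1δ : |1 + δ₃| ≤ 1 + u := by
      calc |1 + δ₃| ≤ |(1:ℝ)| + |δ₃| := abs_add_le _ _
        _ ≤ 1 + u := by rw [abs_one]; linarith only [hδ₃]
    calc |t| * |ehat| = |ehat'| * |1 + δ₃| := by rw [← abs_mul, htehat, abs_mul]
      _ ≤ |ehat'| * (1+u) := mul_le_mul_of_nonneg_left h1δ (abs_nonneg _)
      _ = (1+u) * |ehat'| := mul_comm _ _
  -- bound on qhatp
  have hqhatp1 : (1-u) * |qhatp| ≤ |t| * |qhat'| := by
    have h' : |qhatp| ≤ |t| * |qhat'| + |μ₄| := by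
      calc |qhatp| = |t * qhat' - μ₄| := by rw [hqp]
        _ ≤ |t * qhat'| + |μ₄| := abs_sub _ _
        _ = |t| * |qhat'| + |μ₄| := by rw [abs_mul]
    linarith only [h', hμ₄]
  have hP : (1-u)^2 * (E * |qhatp|) ≤ (1+u)^3 * (A * Bp) := by
    have c1 : (0:ℝ) ≤ (1-u) * E := mul_nonneg (by linarith) hE.le
    have s1 : ((1-u)*E) * ((1-u) * |qhatp|) ≤ ((1-u)*E) * (|t| * |qhat'|) :=
      mul_le_mul_of_nonneg_left hqhatp1 c1
    have s2 : ((1-u)*E) * (|t| * |qhat'|) ≤ |ehat| * (|t| * |qhat'|) :=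
      mul_le_mul_of_nonneg_right hehatge (by positivity)
    have s4 : (|t| * |ehat|) * |qhat'| ≤ ((1+u) * |ehat'|) * |qhat'| :=
      mul_le_mul_of_nonneg_right ht1 (abs_nonneg _)
    have s5 : ((1+u) * |ehat'|) * |qhat'| ≤ ((1+u) * ((1+u)*Bp)) * ((1+u)*A) := by
      apply mul_le_mul
      · exact mul_le_mul_of_nonneg_left hehat'le (by linarith only [hu])
      · exact hqhat'le
      · exact abs_nonneg _
      · positivity
    calc (1-u)^2 * (E * |qhatp|) = ((1-u)*E) * ((1-u) * |qhatp|) := by ring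
      _ ≤ ((1-u)*E) * (|t| * |qhat'|) := s1
      _ ≤ |ehat| * (|t| * |qhat'|) := s2
      _ = (|t| * |ehat|) * |qhat'| := by ring
      _ ≤ ((1+u) * |ehat'|) * |qhat'| := s4
      _ ≤ ((1+u) * ((1+u)*Bp)) * ((1+u)*A) := s5
      _ = (1+u)^3 * (A * Bp) := by ring
  -- the key identity
  set S := e' * εεq' + q' * εεe' - qp * εεe - εεq' * εεe' with hSdef
  set X := eqhat' * eehat' + eqhat' * ehat' * θa + eehat' * qhat' * θb
      - eehat * qhatp * θc - μ₃ * qhat' * θd - μ₄ * ehat * θe with hXdef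
  have hkey : eqhatp - (qhatp - qp) = (S + X) / (e - εεe) := by
    have hμ3' : μ₃ = ehat' - t * ehat := by linarith only [hdiv]
    have hμ4' : μ₄ = t * qhat' - qhatp := by linarith only [hqp]
    have hnum : eqhat' * ehat' * (1 + θa) + eehat' * qhat' * (1 + θb)
        - eehat * qhatp * (1 + θc) - μ₃ * qhat' * (1 + θd)
        - μ₄ * ehat * (1 + θe) = S + X + (qhatp - qp) * (e - εεe) := by
      rw [hSdef, hXdef, hμ3', hμ4', hehat, hehat', hqhat', heehat, heehat', heqhat']
      linear_combination hrule
    rw [hdef, hDeq, hnum]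
    field_simp
    ring
  -- bound on |X|
  have hμ₃' : |μ₃| ≤ u * ((1+u) * Bp) :=
    le_trans hμ₃ (mul_le_mul_of_nonneg_left hehat'le hu)
  have t1 : |eqhat' * eehat'| ≤ u^2 * (A * Bp) := by
    rw [abs_mul]
    calc |eqhat'| * |eehat'| ≤ (u*A) * (u*Bp) :=
        mul_le_mul h3 h2 (abs_nonneg _) (by positivity)
      _ = u^2 * (A*Bp) := by ring
  have t2 : |eqhat' * ehat' * θa| ≤ g7 * (u * (1+u) * (A*Bp)) := by
    rw [abs_mul, abs_mul]
    calc |eqhat'| * |ehat'| * |θa|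
        ≤ ((u*A) * ((1+u)*Bp)) * g7 := by
          apply mul_le_mul _ hθa (abs_nonneg _) (by positivity)
          exact mul_le_mul h3 hehat'le (abs_nonneg _) (by positivity)
      _ = g7 * (u * (1+u) * (A*Bp)) := by ring
  have t3 : |eehat' * qhat' * θb| ≤ g7 * (u * (1+u) * (A*Bp)) := by
    rw [abs_mul, abs_mul]
    calc |eehat'| * |qhat'| * |θb|
        ≤ ((u*Bp) * ((1+u)*A)) * g7 := by
          apply mul_le_mul _ hθb (abs_nonneg _) (by positivity)
          exact mul_le_mul h2 hqhat'le (abs_nonneg _) (by positivity)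
      _ = g7 * (u * (1+u) * (A*Bp)) := by ring
  have t4 : |eehat * qhatp * θc| ≤ g6 * (u * (E * |qhatp|)) := by
    rw [abs_mul, abs_mul]
    calc |eehat| * |qhatp| * |θc|
        ≤ ((u*E) * |qhatp|) * g6 := by
          apply mul_le_mul _ hθc (abs_nonneg _) (by positivity)
          exact mul_le_mul_of_nonneg_right h1 (abs_nonneg _)
      _ = g6 * (u * (E * |qhatp|)) := by ring
  have t5 : |μ₃ * qhat' * θd| ≤ g5 * (u * (1+u)^2 * (A*Bp)) := by
    rw [abs_mul, abs_mul]
    calc |μ₃| * |qhat'| * |θd|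
        ≤ ((u*((1+u)*Bp)) * ((1+u)*A)) * g5 := by
          apply mul_le_mul _ hθd (abs_nonneg _) (by positivity)
          exact mul_le_mul hμ₃' hqhat'le (abs_nonneg _) (by positivity)
      _ = g5 * (u * (1+u)^2 * (A*Bp)) := by ring
  have t6 : |μ₄ * ehat * θe| ≤ g4 * (u * (1+u) * (E * |qhatp|)) := by
    rw [abs_mul, abs_mul]
    calc |μ₄| * |ehat| * |θe|
        ≤ ((u*|qhatp|) * ((1+u)*E)) * g4 := by
          apply mul_le_mul _ hθe (abs_nonneg _) (by positivity)
          exact mul_le_mul hμ₄ hehatle (abs_nonneg _) (by positivity)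
      _ = g4 * (u * (1+u) * (E * |qhatp|)) := by ring
  have tri : |X| ≤ |eqhat' * eehat'| + |eqhat' * ehat' * θa| + |eehat' * qhat' * θb|
      + |eehat * qhatp * θc| + |μ₃ * qhat' * θd| + |μ₄ * ehat * θe| := by
    rw [hXdef]
    apply abs_le.mpr
    constructor
    · linarith only [neg_abs_le (eqhat' * eehat'), neg_abs_le (eqhat' * ehat' * θa),
        neg_abs_le (eehat' * qhat' * θb), le_abs_self (eehat * qhatp * θc),
        le_abs_self (μ₃ * qhat' * θd), le_abs_self (μ₄ * ehat * θe)]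
    · linarith only [le_abs_self (eqhat' * eehat'), le_abs_self (eqhat' * ehat' * θa),
        le_abs_self (eehat' * qhat' * θb), neg_abs_le (eehat * qhatp * θc),
        neg_abs_le (μ₃ * qhat' * θd), neg_abs_le (μ₄ * ehat * θe)]
  have hX : |X| ≤ (u^2 + 2*g7*u*(1+u) + g5*u*(1+u)^2) * (A*Bp)
      + (g6*u + g4*u*(1+u)) * (E * |qhatp|) := by
    have h' := tri
    linarith only [t1, t2, t3, t4, t5, t6, h']
  -- the scalar inequality
  set R := u^2 / ((1-7*u)*(1-8*u)) with hRdef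
  have hR0 : 0 ≤ R := by rw [hRdef]; positivity
  have hGR : g7 * g8 = 56 * R := by
    rw [g7e, g8e, hRdef]; field_simp; ring
  have hscal : (1-u)^2 * (u^2 + 2*g7*u*(1+u) + g5*u*(1+u)^2)
      + (1+u)^3 * (g6*u + g4*u*(1+u)) ≤ (1-u)^2 * (g7*g8) := by
    have ha := aux_a u hu h8u
    have hb := aux_b u hu h8u
    have hc := aux_c u hu h8u
    have hd := aux_d u hu h8u
    have hee := aux_e u hu h8u
    rw [← hRdef] at ha hb hc hd hee
    rw [← g7e] at hb
    rw [← g5e] at hc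
    rw [← g6e] at hd
    rw [← g4e] at hee
    have h1u2 : (0:ℝ) ≤ (1-u)^2 := sq_nonneg _
    have s : (1-u)^2 * (u^2 + 2*g7*u*(1+u) + g5*u*(1+u)^2) ≤ (1-u)^2 * (20*R) := by
      apply mul_le_mul_of_nonneg_left _ h1u2
      linarith only [ha, hb, hc]
    rw [hGR]
    have hnn : 0 ≤ (1-u)^2 * R := mul_nonneg h1u2 hR0
    linarith only [s, hd, hee, hnn]
  -- combine: |X| ≤ g7*g8 * (A*Bp)
  have hXG : |X| ≤ g7*g8 * (A*Bp) := by
    have h1u2 : (0:ℝ) < (1-u)^2 := by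
      have h1u : (0:ℝ) < 1 - u := by linarith only [hu, h8u]
      positivity
    have c2nn : (0:ℝ) ≤ g6*u + g4*u*(1+u) := by positivity
    have step : (1-u)^2 * |X| ≤ (1-u)^2 * (g7*g8 * (A*Bp)) := by
      have m1 := mul_le_mul_of_nonneg_left hX (le_of_lt h1u2)
      have m2 := mul_le_mul_of_nonneg_left hP c2nn
      have m3 := mul_le_mul_of_nonneg_right hscal (mul_nonneg hA0 hB0)
      linarith only [m1, m2, m3]
    exact le_of_mul_le_mul_left step h1u2
  -- A*Bp versus |qp|*|e|
  set Bd := |q'| * |εεe'| + |e'| * |εεq'| + |qp| * |εεe| + |εεq'| * |εεe'| with hBdDef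
  have hAB : A * Bp ≤ |qp| * |e| + Bd := by
    have hexp : (q' - εεq') * (e' - εεe') = qp * e - q' * εεe' - e' * εεq' + εεq' * εεe' := by
      linear_combination -hrule
    have habs : A * Bp = |qp * e - q' * εεe' - e' * εεq' + εεq' * εεe'| := by
      rw [hAdef, hBdef, ← abs_mul, hexp]
    rw [habs, hBdDef]
    have e1 : |qp * e| = |qp| * |e| := abs_mul _ _
    have e2 : |q' * εεe'| = |q'| * |εεe'| := abs_mul _ _
    have e3 : |e' * εεq'| = |e'| * |εεq'| := abs_mul _ _
    have e4 : |εεq' * εεe'| = |εεq'| * |εεe'| := abs_mul _ _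
    have e5 : (0:ℝ) ≤ |qp| * |εεe| := by positivity
    apply abs_le.mpr
    constructor
    · linarith only [e1, e2, e3, e4, e5, neg_abs_le (qp * e), le_abs_self (q' * εεe'),
        le_abs_self (e' * εεq'), neg_abs_le (εεq' * εεe')]
    · linarith only [e1, e2, e3, e4, e5, le_abs_self (qp * e), neg_abs_le (q' * εεe'),
        neg_abs_le (e' * εεq'), le_abs_self (εεq' * εεe')]
  have hS : |S| ≤ Bd := by
    rw [hSdef, hBdDef]
    have e2 : |q' * εεe'| = |q'| * |εεe'| := abs_mul _ _
    have e3 : |e' * εεq'| = |e'| * |εεq'| := abs_mul _ _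
    have e4 : |εεq' * εεe'| = |εεq'| * |εεe'| := abs_mul _ _
    have e5 : |qp * εεe| = |qp| * |εεe| := abs_mul _ _
    apply abs_le.mpr
    constructor
    · linarith only [e2, e3, e4, e5, neg_abs_le (e' * εεq'), neg_abs_le (q' * εεe'),
        le_abs_self (qp * εεe), le_abs_self (εεq' * εεe')]
    · linarith only [e2, e3, e4, e5, le_abs_self (e' * εεq'), le_abs_self (q' * εεe'),
        neg_abs_le (qp * εεe), neg_abs_le (εεq' * εεe')]
  -- final assembly
  have he0 : (0:ℝ) < |e| := abs_pos.mpr he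
  rw [show |e / (e - εεe)| = |e| / E from by rw [abs_div, ← hEdef]]
  have hgoal_eq : g7*g8 * (|e|/E) * |qp| + (1+g7*g8) * ((|e|/E) * Bd / |e|)
      = (g7*g8 * (|qp| * |e|) + (1+g7*g8) * Bd) / E := by
    field_simp
  rw [hgoal_eq, hkey, abs_div, ← hEdef]
  have hnum_le : |S + X| ≤ g7*g8 * (|qp| * |e|) + (1+g7*g8) * Bd := by
    have htr : |S + X| ≤ |S| + |X| := abs_add_le _ _
    have hGnn : (0:ℝ) ≤ g7*g8 := mul_nonneg g70 g80
    have h5 := mul_le_mul_of_nonneg_left hAB hGnn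
    linarith only [htr, hS, hXG, h5]
  gcongr
end
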